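/- arXiv:1803.05804 — 10 statements merged into one kernel-verified Lean document; each statement's English description precedes it below -/
import Mathlib

section
/- (Theorem 10, parametric uncertainties with convexly constrained terminal cost). Let α < 0 < β be reals. For j = 1, 2, let A_j ∈ ℝ^{k_j×k_j} be Hurwitz, B_j ∈ ℝ^{k_j×nz}, C_j ∈ ℝ^{m_j×k_j}, D_j ∈ ℝ^{m_j×nz}, and set A_Ψ := diag(A₁, A₂), B_Ψ := diag(B₁, B₂), C_Ψ := diag(C₁, C₂), D_Ψ := diag(D₁, D₂), J := [I_{nz}; I_{nz}], T := [[I_{nz}, −β⁻¹ I_{nz}],[−α I_{nz}, I_{nz}]]. Let P ∈ ℝ^{m₁×m₂} and M := [[0, P],[Pᵀ, 0]]. Suppose there exist R = Rᵀ ∈ ℝ^{(k₁+k₂)×(k₁+k₂)} (partitioned into blocks R₁₁ ∈ ℝ^{k₁×k₁}, R₁₂, R₂₁, R₂₂ conformably with diag(A₁,A₂)) and K ∈ ℝ^{k₁×k₂} such that KYP(R, M; A_Ψ, B_Ψ J, C_Ψ, D_Ψ J) ≻ 0 and [[R₁₁, R₁₂ − K],[R₂₁ − Kᵀ, R₂₂]]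 ≺ 0. Then for every δ ∈ [α, β], every z ∈ L2e^{nz} and every T' > 0, the filter trajectory ξ = (ξ₁, ξ₂) of (A_Ψ, B_Ψ T, C_Ψ, D_Ψ T) driven by u := (z, δ·z), with output y, satisfies ∫₀^{T'} y(t)ᵀ M y(t) dt + 2 ξ₁(T')ᵀ K ξ₂(T') ≥ 0; that is, the multiplication operator Δ_δ(z) := δ·z satisfies a finite-horizon IQC with terminal cost matrix [[0, K],[Kᵀ, 0]] with respect to the filter (A_Ψ, B_Ψ T, C_Ψ, D_Ψ T) and middle matrix M. -/
/-!
With `c₁ = 1 - δ/β ≥ 0` and `c₂ = δ - α ≥ 0`, the loop transformation feeds `c₁ z` into the first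
filter and `c₂ z` into the second. The rescaled state `η = (c₂ ξ₁, c₁ ξ₂)` is then a trajectory of
the filter `(A_Ψ, B_Ψ J)` driven by `c₁ c₂ z`, with output `(c₂ y₁, c₁ y₂)`; as `M` and the
terminal cost are off-diagonal, each quadratic form only picks up the factor `c₁ c₂`. The KYP
inequality makes `ηᵀ R η` a storage function along the (absolutely continuous) trajectory, and
`R ≺ [[0, K], [Kᵀ, 0]]` turns it into the terminal cost, which gives the IQC after dividing by
`c₁ c₂`. At the endpoints `δ ∈ {α, β}`, where `c₁ c₂ = 0`, strictness of that inequality forces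
`η ≡ 0` instead, so one block of `ξ` and of `y` vanishes and both terms are zero.
-/

open MeasureTheory Matrix

noncomputable section

namespace IQCPaper

/-- Membership in `L2e^p`: measurable and square integrable on every bounded interval. -/
def MemL2e (p : ℕ) (f : ℝ → Fin p → ℝ) : Prop :=
  Measurable f ∧ ∀ T : ℝ, 0 < T → IntegrableOn (fun t => ‖f t‖ ^ 2) (Set.Ioc 0 T) volume

/-- Membership in `L2^p`. -/
def MemL2 (p : ℕ) (f : ℝ → Fin p → ℝ) : Prop :=
  MemL2e p f ∧ IntegrableOn (fun t => ‖f t‖ ^ 2) (Set.Ioi 0) volume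

/-- The `L2` norm on `[0,∞)`. -/
def L2norm (p : ℕ) (f : ℝ → Fin p → ℝ) : ℝ :=
  Real.sqrt (∫ t in Set.Ioi (0 : ℝ), ‖f t‖ ^ 2)

/-- The filter trajectory: absolutely continuous solution of
`ξ' = A ξ + B u`, `ξ(0) = 0`, written in integral form. -/
def IsFilterTraj {k m : Type*} [Fintype k] [Fintype m]
    (A : Matrix k k ℝ) (B : Matrix k m ℝ)
    (u : ℝ → m → ℝ) (ξ : ℝ → k → ℝ) : Prop :=
  Continuous ξ ∧ ξ 0 = 0 ∧
    ∀ t : ℝ, 0 ≤ t → ξ t = ∫ s in (0 : ℝ)..t, (A.mulVec (ξ s) + B.mulVec (u s))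

/-- The KYP matrix. -/
def KYP {n m q : Type*} [Fintype n] [Fintype m] [Fintype q]
    (X : Matrix n n ℝ) (M : Matrix q q ℝ)
    (A : Matrix n n ℝ) (B : Matrix n m ℝ)
    (C : Matrix q n ℝ) (D : Matrix q m ℝ) : Matrix (n ⊕ m) (n ⊕ m) ℝ :=
  fromBlocks (Aᵀ * X + X * A + Cᵀ * M * C) (X * B + Cᵀ * M * D)
    (Bᵀ * X + Dᵀ * M * C) (Dᵀ * M * D)

/-- A real square matrix is Hurwitz if all its complex eigenvalues have negative real part. -/
def IsHurwitz {n : Type*} [Fintype n] [DecidableEq n] (A : Matrix n n ℝ) : Prop :=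
  ∀ μ ∈ spectrum ℂ (A.map Complex.ofReal), μ.re < 0

/-- Finite-horizon IQC with terminal cost matrix `Z`. -/
def FiniteHorizonIQC {k q : Type*} [Fintype k] [Fintype q] (nz nw : ℕ)
    (AΨ : Matrix k k ℝ) (BΨ : Matrix k (Fin nz ⊕ Fin nw) ℝ)
    (CΨ : Matrix q k ℝ) (DΨ : Matrix q (Fin nz ⊕ Fin nw) ℝ)
    (M : Matrix q q ℝ) (Z : Matrix k k ℝ)
    (Δ : (ℝ → Fin nz → ℝ) → (ℝ → Fin nw → ℝ)) : Prop :=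
  ∀ z : ℝ → Fin nz → ℝ, MemL2e nz z →
    ∀ ξ : ℝ → k → ℝ,
      IsFilterTraj AΨ BΨ (fun t => Sum.elim (z t) (Δ z t)) ξ →
      ∀ T : ℝ, 0 < T →
        0 ≤ (∫ t in (0 : ℝ)..T,
              (CΨ.mulVec (ξ t) + DΨ.mulVec (Sum.elim (z t) (Δ z t))) ⬝ᵥ
                M.mulVec (CΨ.mulVec (ξ t) + DΨ.mulVec (Sum.elim (z t) (Δ z t))))
            + (ξ T) ⬝ᵥ Z.mulVec (ξ T)

/-- Factorization identities for `(Z̃, M̃, C̃, D̃)`. -/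
def FactIds {k m q : Type*} [Fintype k] [Fintype m] [Fintype q]
    (AΨ : Matrix k k ℝ) (BΨ : Matrix k m ℝ) (CΨ : Matrix q k ℝ) (DΨ : Matrix q m ℝ)
    (M : Matrix q q ℝ) (Z' : Matrix k k ℝ) (M' : Matrix m m ℝ)
    (C' : Matrix m k ℝ) (D' : Matrix m m ℝ) : Prop :=
  Z'.IsSymm ∧ M'.IsSymm ∧
    AΨᵀ * Z' + Z' * AΨ + CΨᵀ * M * CΨ = C'ᵀ * M' * C' ∧
    Z' * BΨ + CΨᵀ * M * DΨ = C'ᵀ * M' * D' ∧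
    DΨᵀ * M * DΨ = D'ᵀ * M' * D'

/-- `(Z̃, M̃, C̃, D̃)` certifies a canonical factorization of `(AΨ, BΨ, CΨ, DΨ, M)`. -/
def CertifiesCanonical {k m q : Type*} [Fintype k] [Fintype m] [Fintype q]
    [DecidableEq k] [DecidableEq m]
    (AΨ : Matrix k k ℝ) (BΨ : Matrix k m ℝ) (CΨ : Matrix q k ℝ) (DΨ : Matrix q m ℝ)
    (M : Matrix q q ℝ) (Z' : Matrix k k ℝ) (M' : Matrix m m ℝ)
    (C' : Matrix m k ℝ) (D' : Matrix m m ℝ) : Prop :=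
  FactIds AΨ BΨ CΨ DΨ M Z' M' C' D' ∧ IsUnit D' ∧ IsHurwitz (AΨ - BΨ * D'⁻¹ * C')

/-- A causal operator. -/
def Causal (nz nw : ℕ) (Δ : (ℝ → Fin nz → ℝ) → (ℝ → Fin nw → ℝ)) : Prop :=
  ∀ z z' : ℝ → Fin nz → ℝ, ∀ T : ℝ, 0 < T →
    (∀ᵐ t ∂(volume.restrict (Set.Icc (0 : ℝ) T)), z t = z' t) →
    (∀ᵐ t ∂(volume.restrict (Set.Icc (0 : ℝ) T)), Δ z t = Δ z' t)

/-- A bounded operator from `L2^{nz}` to `L2^{nw}`. -/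
def BoundedOp (nz nw : ℕ) (Δ : (ℝ → Fin nz → ℝ) → (ℝ → Fin nw → ℝ)) : Prop :=
  ∃ c : ℝ, 0 ≤ c ∧ ∀ z, MemL2 nz z → MemL2 nw (Δ z) ∧ L2norm nw (Δ z) ≤ c * L2norm nz z

open Set
open scoped ENNReal

section Integration

theorem _root_.ContinuousLinearMap.intervalIntegrable_comp {E F : Type*} [NormedAddCommGroup E]
    [NormedAddCommGroup F] [NormedSpace ℝ E] [NormedSpace ℝ F] (L : E →L[ℝ] F) {f : ℝ → E}
    {μ : Measure ℝ} {a b : ℝ} (hf : IntervalIntegrable f μ a b) :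
    IntervalIntegrable (fun x => L (f x)) μ a b :=
  ⟨L.integrable_comp hf.1, L.integrable_comp hf.2⟩

theorem intervalIntegral_mul_intervalIntegral {f g : ℝ → ℝ} {a b : ℝ}
    (hf : IntervalIntegrable f volume a b) (hg : IntervalIntegrable g volume a b) :
    (∫ x in a..b, f x) * (∫ x in a..b, g x) =
      ∫ x in a..b, (f x * ∫ t in a..x, g t) + (∫ t in a..x, f t) * g x := by
  have hF := hf.absolutelyContinuousOnInterval_intervalIntegral left_mem_uIcc
  have hG := hg.absolutelyContinuousOnInterval_intervalIntegral left_mem_uIcc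
  have h := hF.integral_deriv_mul_eq_sub hG
  simp only [intervalIntegral.integral_same, mul_zero, sub_zero] at h
  rw [← h]
  refine intervalIntegral.integral_congr_ae ?_
  filter_upwards [hf.ae_hasDerivAt_integral, hg.ae_hasDerivAt_integral] with x hfx hgx hx
  have hx' : x ∈ uIcc a b := uIoc_subset_uIcc hx
  rw [(hfx hx' a left_mem_uIcc).deriv, (hgx hx' a left_mem_uIcc).deriv, mul_comm (f x)]

theorem _root_.IntervalIntegrable.mulVec {ι κ : Type*} [Fintype ι] [Fintype κ]
    (N : Matrix κ ι ℝ) {g : ℝ → ι → ℝ} {a b : ℝ} (hg : IntervalIntegrable g volume a b) :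
    IntervalIntegrable (fun x => N *ᵥ g x) volume a b :=
  (Matrix.mulVecLin N).toContinuousLinearMap.intervalIntegrable_comp hg

theorem _root_.Matrix.mulVec_intervalIntegral {ι κ : Type*} [Fintype ι] [Fintype κ]
    (N : Matrix κ ι ℝ) {g : ℝ → ι → ℝ} {a b : ℝ} (hg : IntervalIntegrable g volume a b) :
    N *ᵥ ∫ x in a..b, g x = ∫ x in a..b, N *ᵥ g x :=
  ((Matrix.mulVecLin N).toContinuousLinearMap.intervalIntegral_comp_comm hg).symm

theorem dotProduct_mulVec_intervalIntegral {ι : Type*} [Fintype ι] (R : Matrix ι ι ℝ)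
    {g : ℝ → ι → ℝ} {a b : ℝ} (hg : IntervalIntegrable g volume a b) :
    (∫ x in a..b, g x) ⬝ᵥ R *ᵥ ∫ x in a..b, g x =
      ∫ x in a..b, g x ⬝ᵥ R *ᵥ (∫ t in a..x, g t) + (∫ t in a..x, g t) ⬝ᵥ R *ᵥ g x := by
  have hRg := hg.mulVec R
  have hmulVec : ∀ x ∈ uIcc a b, R *ᵥ ∫ t in a..x, g t = ∫ t in a..x, R *ᵥ g t :=
    fun x hx => R.mulVec_intervalIntegral (hg.mono_set (uIcc_subset_uIcc left_mem_uIcc hx))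
  have heval : ∀ {h : ℝ → ι → ℝ}, IntervalIntegrable h volume a b → ∀ x ∈ uIcc a b, ∀ i,
      (∫ t in a..x, h t) i = ∫ t in a..x, h t i := fun hh x hx i =>
    ((ContinuousLinearMap.proj (R := ℝ) i).intervalIntegral_comp_comm
      (hh.mono_set (uIcc_subset_uIcc left_mem_uIcc hx))).symm
  have hcomp : ∀ {h : ℝ → ι → ℝ}, IntervalIntegrable h volume a b → ∀ i,
      IntervalIntegrable (fun t => h t i) volume a b :=
    fun hh i => (ContinuousLinearMap.proj (R := ℝ) i).intervalIntegrable_comp hh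
  have hprim : ∀ {h : ℝ → ℝ}, IntervalIntegrable h volume a b →
      ContinuousOn (fun x => ∫ t in a..x, h t) (uIcc a b) :=
    fun hh => intervalIntegral.continuousOn_primitive_interval' hh left_mem_uIcc
  calc (∫ x in a..b, g x) ⬝ᵥ R *ᵥ ∫ x in a..b, g x
      = ∑ i, (∫ x in a..b, g x i) * ∫ x in a..b, (R *ᵥ g x) i := by
        rw [hmulVec b right_mem_uIcc, dotProduct]
        exact Finset.sum_congr rfl fun i _ => by
          rw [heval hg b right_mem_uIcc, heval hRg b right_mem_uIcc]
    _ = ∑ i, ∫ x in a..b,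
          (g x i * ∫ t in a..x, (R *ᵥ g t) i) + (∫ t in a..x, g t i) * (R *ᵥ g x) i :=
        Finset.sum_congr rfl fun i _ =>
          intervalIntegral_mul_intervalIntegral (hcomp hg i) (hcomp hRg i)
    _ = ∫ x in a..b, ∑ i,
          ((g x i * ∫ t in a..x, (R *ᵥ g t) i) + (∫ t in a..x, g t i) * (R *ᵥ g x) i) := by
        refine (intervalIntegral.integral_finsetSum fun i _ => ?_).symm
        exact ((hcomp hg i).mul_continuousOn (hprim (hcomp hRg i))).add
          ((hcomp hRg i).continuousOn_mul (hprim (hcomp hg i)))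
    _ = _ := by
        refine intervalIntegral.integral_congr fun x hx => ?_
        simp only [dotProduct, ← Finset.sum_add_distrib, hmulVec x hx, heval hg x hx,
          heval hRg x hx]

theorem _root_.Continuous.memLp_restrict_Ioc {E : Type*} [NormedAddCommGroup E] {f : ℝ → E}
    (hf : Continuous f) (p : ℝ≥0∞) (a b : ℝ) : MemLp f p (volume.restrict (Ioc a b)) := by
  obtain ⟨C, hC⟩ := (isCompact_Icc (a := a) (b := b)).exists_bound_of_continuousOn hf.continuousOn
  exact MemLp.of_bound hf.aestronglyMeasurable C
    (ae_restrict_of_forall_mem measurableSet_Ioc fun t ht => hC t (Ioc_subset_Icc_self ht))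

theorem _root_.MeasureTheory.MemLp.mulVec {α ι κ : Type*} [MeasurableSpace α] {μ : Measure α}
    {p : ℝ≥0∞} [Fintype ι] [Fintype κ] (N : Matrix κ ι ℝ) {f : α → ι → ℝ} (hf : MemLp f p μ) :
    MemLp (fun x => N *ᵥ f x) p μ :=
  (Matrix.mulVecLin N).toContinuousLinearMap.comp_memLp' hf

theorem _root_.MeasureTheory.MemLp.integrable_dotProduct {α ι : Type*} [MeasurableSpace α]
    {μ : Measure α} [Fintype ι] {f g : α → ι → ℝ} (hf : MemLp f 2 μ) (hg : MemLp g 2 μ) :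
    Integrable (fun x => f x ⬝ᵥ g x) μ :=
  integrable_finsetSum _ fun i _ => (hf.eval i).integrable_mul (hg.eval i)

theorem _root_.MeasureTheory.MemLp.intervalIntegrable {E : Type*} [NormedAddCommGroup E]
    {f : ℝ → E} {p : ℝ≥0∞} {a b : ℝ} (hp : 1 ≤ p) (hab : a ≤ b)
    (hf : MemLp f p (volume.restrict (Ioc a b))) : IntervalIntegrable f volume a b :=
  (intervalIntegrable_iff_integrableOn_Ioc_of_le hab).2 (hf.integrable hp)

theorem _root_.MeasureTheory.MemLp.intervalIntegrable_dotProduct {ι : Type*} [Fintype ι]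
    {f g : ℝ → ι → ℝ} {a b : ℝ} (hab : a ≤ b) (hf : MemLp f 2 (volume.restrict (Ioc a b)))
    (hg : MemLp g 2 (volume.restrict (Ioc a b))) :
    IntervalIntegrable (fun t => f t ⬝ᵥ g t) volume a b :=
  (intervalIntegrable_iff_integrableOn_Ioc_of_le hab).2 (hf.integrable_dotProduct hg)

theorem MemL2e.memLp_restrict_Ioc {p : ℕ} {z : ℝ → Fin p → ℝ} (hz : MemL2e p z) (T : ℝ) :
    MemLp z 2 (volume.restrict (Ioc 0 T)) := by
  rcases le_or_gt T 0 with hT | hT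
  · simp [Ioc_eq_empty_of_le hT]
  · exact (memLp_two_iff_integrable_sq_norm hz.1.aestronglyMeasurable).2 (hz.2 T hT)

end Integration

section Dissipation

variable {n m q : Type*} [Fintype n] [Fintype m] [Fintype q]

theorem dotProduct_KYP_mulVec_sumElim (R : Matrix n n ℝ) (M : Matrix q q ℝ)
    (A : Matrix n n ℝ) (B : Matrix n m ℝ) (C : Matrix q n ℝ) (D : Matrix q m ℝ)
    (x : n → ℝ) (w : m → ℝ) :
    (x ⊕ᵥ w) ⬝ᵥ KYP R M A B C D *ᵥ (x ⊕ᵥ w) =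
      (A *ᵥ x + B *ᵥ w) ⬝ᵥ R *ᵥ x + x ⬝ᵥ R *ᵥ (A *ᵥ x + B *ᵥ w) +
        (C *ᵥ x + D *ᵥ w) ⬝ᵥ M *ᵥ (C *ᵥ x + D *ᵥ w) := by
  simp only [KYP, fromBlocks_mulVec, Sum.elim_comp_inl, Sum.elim_comp_inr,
    sumElim_dotProduct_sumElim, add_mulVec, mulVec_add, dotProduct_add, add_dotProduct,
    ← mulVec_mulVec, dotProduct_mulVec _ Aᵀ, dotProduct_mulVec _ Bᵀ, dotProduct_mulVec _ Cᵀ,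
    dotProduct_mulVec _ Dᵀ, vecMul_transpose]
  ring

theorem isFilterTraj_mul_iff {m' : Type*} [Fintype m'] {A : Matrix n n ℝ} {B : Matrix n m ℝ}
    {N : Matrix m m' ℝ} {u : ℝ → m' → ℝ} {ξ : ℝ → n → ℝ} :
    IsFilterTraj A (B * N) u ξ ↔ IsFilterTraj A B (fun t => N *ᵥ u t) ξ := by
  simp only [IsFilterTraj, mulVec_mulVec]

theorem IsFilterTraj.mulVec {n' m' : Type*} [Fintype n'] [Fintype m']
    {A : Matrix n n ℝ} {B : Matrix n m ℝ} {u : ℝ → m → ℝ} {ξ : ℝ → n → ℝ}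
    {A' : Matrix n' n' ℝ} {B' : Matrix n' m' ℝ} {u' : ℝ → m' → ℝ} (S : Matrix n' n ℝ)
    (hξ : IsFilterTraj A B u ξ) (hu : ∀ t, 0 ≤ t → IntervalIntegrable u volume 0 t)
    (hS : ∀ t, S *ᵥ (A *ᵥ ξ t + B *ᵥ u t) = A' *ᵥ (S *ᵥ ξ t) + B' *ᵥ u' t) :
    IsFilterTraj A' B' u' (fun t => S *ᵥ ξ t) := by
  obtain ⟨hξc, hξ0, hξint⟩ := hξ
  refine ⟨continuous_const.matrix_mulVec hξc, by simp [hξ0], fun t ht => ?_⟩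
  have hg : IntervalIntegrable (fun s => A *ᵥ ξ s + B *ᵥ u s) volume 0 t :=
    (continuous_const.matrix_mulVec hξc).intervalIntegrable 0 t |>.add
      ((hu t ht).mulVec B)
  show S *ᵥ ξ t = _
  rw [hξint t ht, S.mulVec_intervalIntegral hg]
  exact intervalIntegral.integral_congr fun s _ => hS s

theorem IsFilterTraj.dissipation {R : Matrix n n ℝ} {M : Matrix q q ℝ} {A : Matrix n n ℝ}
    {B : Matrix n m ℝ} {C : Matrix q n ℝ} {D : Matrix q m ℝ}
    (hKYP : (KYP R M A B C D).PosSemidef) {u : ℝ → m → ℝ} {ξ : ℝ → n → ℝ}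
    (hξ : IsFilterTraj A B u ξ) {T : ℝ} (hT : 0 ≤ T) (hu : MemLp u 2 (volume.restrict (Ioc 0 T))) :
    0 ≤ (∫ t in 0..T, (C *ᵥ ξ t + D *ᵥ u t) ⬝ᵥ M *ᵥ (C *ᵥ ξ t + D *ᵥ u t)) +
      ξ T ⬝ᵥ R *ᵥ ξ T := by
  obtain ⟨hξc, -, hξint⟩ := hξ
  have hξL := hξc.memLp_restrict_Ioc 2 0 T
  have hgL : MemLp (fun t => A *ᵥ ξ t + B *ᵥ u t) 2 (volume.restrict (Ioc 0 T)) :=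
    (hξL.mulVec A).add (hu.mulVec B)
  have hyL : MemLp (fun t => C *ᵥ ξ t + D *ᵥ u t) 2 (volume.restrict (Ioc 0 T)) :=
    (hξL.mulVec C).add (hu.mulVec D)
  have henergy : ξ T ⬝ᵥ R *ᵥ ξ T = ∫ t in 0..T,
      (A *ᵥ ξ t + B *ᵥ u t) ⬝ᵥ R *ᵥ ξ t + ξ t ⬝ᵥ R *ᵥ (A *ᵥ ξ t + B *ᵥ u t) := by
    rw [hξint T hT, dotProduct_mulVec_intervalIntegral R (hgL.intervalIntegrable one_le_two hT)]
    refine intervalIntegral.integral_congr fun t ht => ?_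
    rw [uIcc_of_le hT] at ht
    simp only [← hξint t ht.1]
  rw [henergy, ← intervalIntegral.integral_add
    (f := fun t => (C *ᵥ ξ t + D *ᵥ u t) ⬝ᵥ M *ᵥ (C *ᵥ ξ t + D *ᵥ u t))
    (g := fun t => (A *ᵥ ξ t + B *ᵥ u t) ⬝ᵥ R *ᵥ ξ t + ξ t ⬝ᵥ R *ᵥ (A *ᵥ ξ t + B *ᵥ u t))
    (hyL.intervalIntegrable_dotProduct hT (hyL.mulVec M))
    ((hgL.intervalIntegrable_dotProduct hT (hξL.mulVec R)).add
      (hξL.intervalIntegrable_dotProduct hT (hgL.mulVec R)))]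
  refine intervalIntegral.integral_nonneg hT fun t _ => ?_
  have h := hKYP.dotProduct_mulVec_nonneg (ξ t ⊕ᵥ u t)
  rw [star_trivial, dotProduct_KYP_mulVec_sumElim] at h
  linarith

end Dissipation

section BlockDiagonal

variable {k₁ k₂ : Type*} [Fintype k₁] [Fintype k₂] [DecidableEq k₁] [DecidableEq k₂]

def blockScalar (a b : ℝ) : Matrix (k₁ ⊕ k₂) (k₁ ⊕ k₂) ℝ := fromBlocks (a • 1) 0 0 (b • 1)

@[simp]
theorem blockScalar_mulVec_sumElim (a b : ℝ) (x : k₁ → ℝ) (y : k₂ → ℝ) :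
    blockScalar a b *ᵥ (x ⊕ᵥ y) = a • x ⊕ᵥ b • y := by
  simp [blockScalar, fromBlocks_mulVec, smul_mulVec]

/-- `Y * fromRows 1 1` elaborates through the `CStarMatrix` multiplication instance, on which
`Matrix.mulVec_mulVec` does not fire syntactically. -/
theorem mul_fromRows_one_one_mulVec {ι ν : Type*} [Fintype ν] [DecidableEq ν]
    (Y : Matrix ι (ν ⊕ ν) ℝ) (w : ν → ℝ) :
    (Y * fromRows (1 : Matrix ν ν ℝ) 1) *ᵥ w = Y *ᵥ (w ⊕ᵥ w) := by
  have h := mulVec_mulVec w Y (fromRows (1 : Matrix ν ν ℝ) (1 : Matrix ν ν ℝ))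
  rw [fromRows_mulVec, one_mulVec] at h
  exact h.symm

theorem blockScalar_mulVec_blockDiagonal_add {l₁ l₂ ν : Type*} [Fintype l₁] [Fintype l₂]
    [DecidableEq l₁] [DecidableEq l₂] [Fintype ν] [DecidableEq ν] (a b : ℝ)
    (X₁ : Matrix l₁ k₁ ℝ) (X₂ : Matrix l₂ k₂ ℝ) (Y₁ : Matrix l₁ ν ℝ) (Y₂ : Matrix l₂ ν ℝ)
    (x : k₁ ⊕ k₂ → ℝ) (w : ν → ℝ) :
    blockScalar b a *ᵥ (fromBlocks X₁ 0 0 X₂ *ᵥ x + fromBlocks Y₁ 0 0 Y₂ *ᵥ (a • w ⊕ᵥ b • w)) =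
      fromBlocks X₁ 0 0 X₂ *ᵥ (blockScalar b a *ᵥ x) +
        (fromBlocks Y₁ 0 0 Y₂ * fromRows (1 : Matrix ν ν ℝ) 1) *ᵥ ((a * b) • w) := by
  obtain ⟨x₁, x₂, rfl⟩ : ∃ x₁ x₂, x = x₁ ⊕ᵥ x₂ := ⟨_, _, (Sum.elim_comp_inl_inr x).symm⟩
  rw [mul_fromRows_one_one_mulVec]
  simp only [fromBlocks_mulVec, Sum.elim_comp_inl, Sum.elim_comp_inr, zero_mulVec, mulVec_smul,
    smul_zero, add_zero, zero_add, ← Sum.elim_add_add, blockScalar_mulVec_sumElim, smul_add,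
    smul_smul, mul_comm b a]

theorem blockScalar_dotProduct_offDiag {ι κ : Type*} [Fintype ι] [Fintype κ] [DecidableEq ι]
    [DecidableEq κ] (a b : ℝ) (P : Matrix ι κ ℝ) (Q : Matrix κ ι ℝ) (v : ι ⊕ κ → ℝ) :
    blockScalar a b *ᵥ v ⬝ᵥ fromBlocks 0 P Q 0 *ᵥ (blockScalar a b *ᵥ v) =
      a * b * (v ⬝ᵥ fromBlocks 0 P Q 0 *ᵥ v) := by
  obtain ⟨x, y, rfl⟩ : ∃ x y, v = x ⊕ᵥ y := ⟨_, _, (Sum.elim_comp_inl_inr v).symm⟩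
  simp [fromBlocks_mulVec, mulVec_smul]
  ring

theorem dotProduct_offDiag_mulVec_eq_zero {ι κ : Type*} [Fintype ι] [Fintype κ] [DecidableEq ι]
    [DecidableEq κ] {a b : ℝ} (hab : a ≠ 0 ∨ b ≠ 0) (P : Matrix ι κ ℝ) (Q : Matrix κ ι ℝ)
    {v : ι ⊕ κ → ℝ}
    (hv : blockScalar a b *ᵥ v = 0) : v ⬝ᵥ fromBlocks 0 P Q 0 *ᵥ v = 0 := by
  obtain ⟨x, y, rfl⟩ : ∃ x y, v = x ⊕ᵥ y := ⟨_, _, (Sum.elim_comp_inl_inr v).symm⟩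
  rw [blockScalar_mulVec_sumElim, ← Sum.elim_zero_zero, Sum.elim_eq_iff] at hv
  rcases hab with ha | hb
  · simp [(smul_eq_zero.1 hv.1).resolve_left ha, fromBlocks_mulVec]
  · simp [(smul_eq_zero.1 hv.2).resolve_left hb, fromBlocks_mulVec]

end BlockDiagonal

section ParametricIQC

variable {k₁ k₂ m₁ m₂ ν : Type*} [Fintype k₁] [Fintype k₂] [Fintype m₁] [Fintype m₂] [Fintype ν]
  [DecidableEq k₁] [DecidableEq k₂] [DecidableEq m₁] [DecidableEq m₂] [DecidableEq ν]
  {A₁ : Matrix k₁ k₁ ℝ} {A₂ : Matrix k₂ k₂ ℝ} {B₁ : Matrix k₁ ν ℝ} {B₂ : Matrix k₂ ν ℝ}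
  {C₁ : Matrix m₁ k₁ ℝ} {C₂ : Matrix m₂ k₂ ℝ} {D₁ : Matrix m₁ ν ℝ} {D₂ : Matrix m₂ ν ℝ}
  {P : Matrix m₁ m₂ ℝ} {Q : Matrix m₂ m₁ ℝ} {R : Matrix (k₁ ⊕ k₂) (k₁ ⊕ k₂) ℝ}
  {w : ℝ → ν → ℝ} {ξ : ℝ → k₁ ⊕ k₂ → ℝ} {a b : ℝ}

theorem IsFilterTraj.blockScalar_dissipation
    (hKYP : (KYP R (fromBlocks 0 P Q 0) (fromBlocks A₁ 0 0 A₂)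
      (fromBlocks B₁ 0 0 B₂ * fromRows (1 : Matrix ν ν ℝ) 1) (fromBlocks C₁ 0 0 C₂)
      (fromBlocks D₁ 0 0 D₂ * fromRows (1 : Matrix ν ν ℝ) 1)).PosSemidef)
    (hw : ∀ T, MemLp w 2 (volume.restrict (Ioc 0 T)))
    (hξ : IsFilterTraj (fromBlocks A₁ 0 0 A₂) (fromBlocks B₁ 0 0 B₂)
      (fun t => a • w t ⊕ᵥ b • w t) ξ) {T : ℝ} (hT : 0 ≤ T) :
    0 ≤ b * a * (∫ t in 0..T,
        (fromBlocks C₁ 0 0 C₂ *ᵥ ξ t + fromBlocks D₁ 0 0 D₂ *ᵥ (a • w t ⊕ᵥ b • w t)) ⬝ᵥ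
          fromBlocks 0 P Q 0 *ᵥ
            (fromBlocks C₁ 0 0 C₂ *ᵥ ξ t + fromBlocks D₁ 0 0 D₂ *ᵥ (a • w t ⊕ᵥ b • w t))) +
      blockScalar b a *ᵥ ξ T ⬝ᵥ R *ᵥ (blockScalar b a *ᵥ ξ T) := by
  have hu (t : ℝ) (ht : 0 ≤ t) : IntervalIntegrable (fun s => a • w s ⊕ᵥ b • w s) volume 0 t :=
    MemLp.intervalIntegrable one_le_two ht <| memLp_pi_iff.2 fun i => by
      cases i <;> exact ((hw t).eval _).const_smul _
  have hη := hξ.mulVec (blockScalar b a) hu fun t =>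
    blockScalar_mulVec_blockDiagonal_add a b A₁ A₂ B₁ B₂ (ξ t) (w t)
  have h := hη.dissipation hKYP hT ((hw T).const_smul (a * b))
  simpa only [← blockScalar_mulVec_blockDiagonal_add, blockScalar_dotProduct_offDiag,
    intervalIntegral.integral_const_mul] using h

theorem IsFilterTraj.offDiagonal_iqc {K : Matrix k₁ k₂ ℝ} {L : Matrix k₂ k₁ ℝ}
    (hKYP : (KYP R (fromBlocks 0 P Q 0) (fromBlocks A₁ 0 0 A₂)
      (fromBlocks B₁ 0 0 B₂ * fromRows (1 : Matrix ν ν ℝ) 1) (fromBlocks C₁ 0 0 C₂)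
      (fromBlocks D₁ 0 0 D₂ * fromRows (1 : Matrix ν ν ℝ) 1)).PosSemidef)
    (hcoup : (-(R - fromBlocks 0 K L 0)).PosDef) (ha : 0 ≤ a) (hb : 0 ≤ b) (hab : a ≠ 0 ∨ b ≠ 0)
    (hw : ∀ T, MemLp w 2 (volume.restrict (Ioc 0 T)))
    (hξ : IsFilterTraj (fromBlocks A₁ 0 0 A₂) (fromBlocks B₁ 0 0 B₂)
      (fun t => a • w t ⊕ᵥ b • w t) ξ) {T : ℝ} (hT : 0 ≤ T) :
    0 ≤ (∫ t in 0..T,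
        (fromBlocks C₁ 0 0 C₂ *ᵥ ξ t + fromBlocks D₁ 0 0 D₂ *ᵥ (a • w t ⊕ᵥ b • w t)) ⬝ᵥ
          fromBlocks 0 P Q 0 *ᵥ
            (fromBlocks C₁ 0 0 C₂ *ᵥ ξ t + fromBlocks D₁ 0 0 D₂ *ᵥ (a • w t ⊕ᵥ b • w t))) +
      ξ T ⬝ᵥ fromBlocks 0 K L 0 *ᵥ ξ T := by
  have hR_le (v : k₁ ⊕ k₂ → ℝ) : v ⬝ᵥ R *ᵥ v ≤ v ⬝ᵥ fromBlocks 0 K L 0 *ᵥ v := by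
    have h := hcoup.posSemidef.dotProduct_mulVec_nonneg v
    rw [star_trivial, neg_sub, sub_mulVec, dotProduct_sub] at h
    linarith
  have hR_lt (v : k₁ ⊕ k₂ → ℝ) (hv : v ≠ 0) : v ⬝ᵥ R *ᵥ v < v ⬝ᵥ fromBlocks 0 K L 0 *ᵥ v := by
    have h := hcoup.dotProduct_mulVec_pos hv
    rw [star_trivial, neg_sub, sub_mulVec, dotProduct_sub] at h
    linarith
  have hdiss (τ : ℝ) (hτ : 0 ≤ τ) := hξ.blockScalar_dissipation hKYP hw hτ
  rcases (mul_nonneg hb ha).lt_or_eq with hba | hba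
  · refine nonneg_of_mul_nonneg_right ?_ hba
    have h := hR_le (blockScalar b a *ᵥ ξ T)
    rw [blockScalar_dotProduct_offDiag] at h
    linarith [hdiss T hT]
  · have hη (τ : ℝ) (hτ : 0 ≤ τ) : blockScalar b a *ᵥ ξ τ = 0 := by
      by_contra hne
      have h := hR_lt _ hne
      have h' := hdiss τ hτ
      rw [blockScalar_dotProduct_offDiag, ← hba, zero_mul] at h
      rw [← hba, zero_mul, zero_add] at h'
      linarith
    have hy (t : ℝ) (ht : t ∈ uIcc 0 T) :
        (fromBlocks C₁ 0 0 C₂ *ᵥ ξ t + fromBlocks D₁ 0 0 D₂ *ᵥ (a • w t ⊕ᵥ b • w t)) ⬝ᵥ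
          fromBlocks 0 P Q 0 *ᵥ
            (fromBlocks C₁ 0 0 C₂ *ᵥ ξ t + fromBlocks D₁ 0 0 D₂ *ᵥ (a • w t ⊕ᵥ b • w t)) = 0 := by
      refine dotProduct_offDiag_mulVec_eq_zero hab.symm P Q ?_
      rw [blockScalar_mulVec_blockDiagonal_add, hη t (uIcc_of_le hT ▸ ht).1, mul_comm, ← hba]
      simp
    rw [intervalIntegral.integral_congr hy, intervalIntegral.integral_zero,
      dotProduct_offDiag_mulVec_eq_zero hab.symm K L (hη T hT), add_zero]

end ParametricIQC

theorem sectorTransform_mulVec {ν : Type*} [Fintype ν] [DecidableEq ν] (α β δ : ℝ)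
    (v : ν → ℝ) :
    fromBlocks 1 (-β⁻¹ • (1 : Matrix ν ν ℝ)) (-α • (1 : Matrix ν ν ℝ)) 1 *ᵥ (v ⊕ᵥ δ • v) =
      (1 - δ * β⁻¹) • v ⊕ᵥ (δ - α) • v := by
  ext (i | i) <;> simp [fromBlocks_mulVec, neg_mulVec, smul_mulVec, mulVec_smul] <;> ring

theorem parametric_finite_horizon_iqc_general
    {nz k₁ k₂ m₁ m₂ : ℕ} (α β : ℝ) (hα : α < 0) (hβ : 0 < β)
    (A₁ : Matrix (Fin k₁) (Fin k₁) ℝ) (A₂ : Matrix (Fin k₂) (Fin k₂) ℝ)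
    (B₁ : Matrix (Fin k₁) (Fin nz) ℝ) (B₂ : Matrix (Fin k₂) (Fin nz) ℝ)
    (C₁ : Matrix (Fin m₁) (Fin k₁) ℝ) (C₂ : Matrix (Fin m₂) (Fin k₂) ℝ)
    (D₁ : Matrix (Fin m₁) (Fin nz) ℝ) (D₂ : Matrix (Fin m₂) (Fin nz) ℝ)
    (P : Matrix (Fin m₁) (Fin m₂) ℝ)
    (R : Matrix (Fin k₁ ⊕ Fin k₂) (Fin k₁ ⊕ Fin k₂) ℝ)
    (K : Matrix (Fin k₁) (Fin k₂) ℝ)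
    (hKYP : (KYP R (fromBlocks 0 P Pᵀ 0)
        (fromBlocks A₁ 0 0 A₂)
        ((fromBlocks B₁ 0 0 B₂) * fromRows (1 : Matrix (Fin nz) (Fin nz) ℝ) 1)
        (fromBlocks C₁ 0 0 C₂)
        ((fromBlocks D₁ 0 0 D₂) * fromRows (1 : Matrix (Fin nz) (Fin nz) ℝ) 1)).PosDef)
    (hcoup : (-(R - fromBlocks 0 K Kᵀ 0)).PosDef) :
    ∀ δ : ℝ, α ≤ δ → δ ≤ β →
      FiniteHorizonIQC nz nz
        (fromBlocks A₁ 0 0 A₂)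
        ((fromBlocks B₁ 0 0 B₂) *
          (fromBlocks 1 (-β⁻¹ • (1 : Matrix (Fin nz) (Fin nz) ℝ))
            (-α • (1 : Matrix (Fin nz) (Fin nz) ℝ)) 1))
        (fromBlocks C₁ 0 0 C₂)
        ((fromBlocks D₁ 0 0 D₂) *
          (fromBlocks 1 (-β⁻¹ • (1 : Matrix (Fin nz) (Fin nz) ℝ))
            (-α • (1 : Matrix (Fin nz) (Fin nz) ℝ)) 1))
        (fromBlocks 0 P Pᵀ 0)
        (fromBlocks 0 K Kᵀ 0)
        (fun z => fun t => δ • z t) := by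
  intro δ hαδ hδβ z hz ξ hξ T hT
  have hc₁ : 0 ≤ 1 - δ * β⁻¹ := sub_nonneg.2 (mul_inv_le_one_of_le₀ hδβ hβ.le)
  have hc₂ : 0 ≤ δ - α := sub_nonneg.2 hαδ
  have hc : 1 - δ * β⁻¹ ≠ 0 ∨ δ - α ≠ 0 := by
    rcases eq_or_ne δ α with rfl | h
    · exact Or.inl (sub_pos.2 (by linarith [mul_neg_of_neg_of_pos hα (inv_pos.2 hβ)])).ne'
    · exact Or.inr (sub_ne_zero.2 h)
  rw [isFilterTraj_mul_iff] at hξ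
  simp only [← mulVec_mulVec, sectorTransform_mulVec] at hξ ⊢
  exact hξ.offDiagonal_iqc hKYP.posSemidef hcoup hc₁ hc₂ hc hz.memLp_restrict_Ioc hT.le

/-- Theorem 10: parametric uncertainties satisfy a finite-horizon IQC with the
convexly constrained structured terminal cost `[[0, K], [Kᵀ, 0]]`. -/
theorem parametric_finite_horizon_iqc
    {nz k₁ k₂ m₁ m₂ : ℕ} (α β : ℝ) (hα : α < 0) (hβ : 0 < β)
    (A₁ : Matrix (Fin k₁) (Fin k₁) ℝ) (A₂ : Matrix (Fin k₂) (Fin k₂) ℝ)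
    (B₁ : Matrix (Fin k₁) (Fin nz) ℝ) (B₂ : Matrix (Fin k₂) (Fin nz) ℝ)
    (C₁ : Matrix (Fin m₁) (Fin k₁) ℝ) (C₂ : Matrix (Fin m₂) (Fin k₂) ℝ)
    (D₁ : Matrix (Fin m₁) (Fin nz) ℝ) (D₂ : Matrix (Fin m₂) (Fin nz) ℝ)
    (hA₁ : IsHurwitz A₁) (hA₂ : IsHurwitz A₂)
    (P : Matrix (Fin m₁) (Fin m₂) ℝ)
    (R : Matrix (Fin k₁ ⊕ Fin k₂) (Fin k₁ ⊕ Fin k₂) ℝ) (hR : R.IsSymm)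
    (K : Matrix (Fin k₁) (Fin k₂) ℝ)
    (hKYP : (KYP R (fromBlocks 0 P Pᵀ 0)
        (fromBlocks A₁ 0 0 A₂)
        ((fromBlocks B₁ 0 0 B₂) * fromRows (1 : Matrix (Fin nz) (Fin nz) ℝ) 1)
        (fromBlocks C₁ 0 0 C₂)
        ((fromBlocks D₁ 0 0 D₂) * fromRows (1 : Matrix (Fin nz) (Fin nz) ℝ) 1)).PosDef)
    (hcoup : (-(R - fromBlocks 0 K Kᵀ 0)).PosDef) :
    ∀ δ : ℝ, α ≤ δ → δ ≤ β →
      FiniteHorizonIQC nz nz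
        (fromBlocks A₁ 0 0 A₂)
        ((fromBlocks B₁ 0 0 B₂) *
          (fromBlocks 1 (-β⁻¹ • (1 : Matrix (Fin nz) (Fin nz) ℝ))
            (-α • (1 : Matrix (Fin nz) (Fin nz) ℝ)) 1))
        (fromBlocks C₁ 0 0 C₂)
        ((fromBlocks D₁ 0 0 D₂) *
          (fromBlocks 1 (-β⁻¹ • (1 : Matrix (Fin nz) (Fin nz) ℝ))
            (-α • (1 : Matrix (Fin nz) (Fin nz) ℝ)) 1))
        (fromBlocks 0 P Pᵀ 0)
        (fromBlocks 0 K Kᵀ 0)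
        (fun z => fun t => δ • z t) :=
  parametric_finite_horizon_iqc_general α β hα hβ A₁ A₂ B₁ B₂ C₁ C₂ D₁ D₂ P R K hKYP hcoup

end IQCPaper
end
end

section
/- (Lemma A.1, congruence invariance of KYP inequalities). Let A ∈ ℝ^{n×n}, B ∈ ℝ^{n×m}, C ∈ ℝ^{q×n}, D ∈ ℝ^{q×m}, let T ∈ ℝ^{n×n}, R ∈ ℝ^{q×q}, S ∈ ℝ^{m×m} be invertible, let F ∈ ℝ^{m×n}, and define Ã := T⁻¹(A T + B F), B̃ := T⁻¹ B S, C̃ := R⁻¹(C T + D F), D̃ := R⁻¹ D S. Then for every symmetric X ∈ ℝ^{n×n} and symmetric M ∈ ℝ^{q×q}: KYP(X, M; A, B, C, D) is negative definite if and only if KYP(Tᵀ X T, Rᵀ M R; Ã, B̃, C̃, D̃) is negative definite. -/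
open MeasureTheory Matrix

noncomputable section

namespace IQCPaper

/-! The change of variables `x = T x̃`, `u = F x̃ + S ũ`, `y = R ỹ` transforms the state-space data
`(A, B, C, D)` into `(Ã, B̃, C̃, D̃)`, and it acts on the KYP matrix as the congruence by the
block lower-triangular matrix `fromBlocks T 0 F S`, which is invertible exactly when `T` and `S`
are. Negative definiteness is invariant under congruence by an invertible matrix. -/

theorem posDef_transpose_mul_mul_iff {ι 𝕜 : Type*} [Fintype ι] [DecidableEq ι] [Ring 𝕜]
    [PartialOrder 𝕜] [StarRing 𝕜] [TrivialStar 𝕜] {P U : Matrix ι ι 𝕜} (hU : IsUnit U) :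
    (Uᵀ * P * U).PosDef ↔ P.PosDef := by
  simpa only [star_eq_conjTranspose, conjTranspose_eq_transpose_of_trivial] using
    hU.posDef_star_left_conjugate_iff (x := P)

theorem kyp_transform_eq_transpose_mul_mul {n m q : Type*} [Fintype n] [Fintype m] [Fintype q]
    [DecidableEq n] [DecidableEq q] {T : Matrix n n ℝ} {R : Matrix q q ℝ}
    (hT : IsUnit T) (hR : IsUnit R) (X : Matrix n n ℝ) (M : Matrix q q ℝ)
    (A : Matrix n n ℝ) (B : Matrix n m ℝ) (C : Matrix q n ℝ) (D : Matrix q m ℝ)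
    (S : Matrix m m ℝ) (F : Matrix m n ℝ) :
    KYP (Tᵀ * X * T) (Rᵀ * M * R) (T⁻¹ * (A * T + B * F)) (T⁻¹ * B * S)
        (R⁻¹ * (C * T + D * F)) (R⁻¹ * D * S) =
      (fromBlocks T 0 F S)ᵀ * KYP X M A B C D * fromBlocks T 0 F S := by
  have := hT.invertible
  have := hR.invertible
  simp only [KYP, fromBlocks_transpose, transpose_zero, fromBlocks_multiply, Matrix.zero_mul,
    Matrix.mul_zero, zero_add]
  congr 1 <;>
    simp only [transpose_mul, transpose_add, transpose_nonsing_inv, Matrix.mul_add,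
      Matrix.add_mul, Matrix.mul_assoc, mul_inv_cancel_left_of_invertible,
      inv_mul_cancel_left_of_invertible] <;>
    abel

theorem kyp_congruence_general
    {n m q : ℕ}
    (A : Matrix (Fin n) (Fin n) ℝ) (B : Matrix (Fin n) (Fin m) ℝ)
    (C : Matrix (Fin q) (Fin n) ℝ) (D : Matrix (Fin q) (Fin m) ℝ)
    (T : Matrix (Fin n) (Fin n) ℝ) (R : Matrix (Fin q) (Fin q) ℝ)
    (S : Matrix (Fin m) (Fin m) ℝ) (F : Matrix (Fin m) (Fin n) ℝ)
    (hT : IsUnit T) (hR : IsUnit R) (hS : IsUnit S)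
    (X : Matrix (Fin n) (Fin n) ℝ)
    (M : Matrix (Fin q) (Fin q) ℝ) :
    (-(KYP X M A B C D)).PosDef ↔
      (-(KYP (Tᵀ * X * T) (Rᵀ * M * R)
          (T⁻¹ * (A * T + B * F)) (T⁻¹ * B * S)
          (R⁻¹ * (C * T + D * F)) (R⁻¹ * D * S))).PosDef := by
  have hG : IsUnit (fromBlocks T 0 F S) := isUnit_fromBlocks_zero₁₂.mpr ⟨hT, hS⟩
  rw [kyp_transform_eq_transpose_mul_mul hT hR, ← Matrix.neg_mul, ← Matrix.mul_neg,
    posDef_transpose_mul_mul_iff hG]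

/-- Lemma A.1: congruence invariance of KYP inequalities. -/
theorem kyp_congruence
    {n m q : ℕ}
    (A : Matrix (Fin n) (Fin n) ℝ) (B : Matrix (Fin n) (Fin m) ℝ)
    (C : Matrix (Fin q) (Fin n) ℝ) (D : Matrix (Fin q) (Fin m) ℝ)
    (T : Matrix (Fin n) (Fin n) ℝ) (R : Matrix (Fin q) (Fin q) ℝ)
    (S : Matrix (Fin m) (Fin m) ℝ) (F : Matrix (Fin m) (Fin n) ℝ)
    (hT : IsUnit T) (hR : IsUnit R) (hS : IsUnit S)
    (X : Matrix (Fin n) (Fin n) ℝ) (hX : X.IsSymm)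
    (M : Matrix (Fin q) (Fin q) ℝ) (hM : M.IsSymm) :
    (-(KYP X M A B C D)).PosDef ↔
      (-(KYP (Tᵀ * X * T) (Rᵀ * M * R)
          (T⁻¹ * (A * T + B * F)) (T⁻¹ * B * S)
          (R⁻¹ * (C * T + D * F)) (R⁻¹ * D * S))).PosDef :=
  kyp_congruence_general A B C D T R S F hT hR hS X M

end IQCPaper
end
end

section
/- (Characterization of canonical factorization certificates via the algebraic Riccati equation, Section 3.1). Let A_Ψ ∈ ℝ^{k×k}, B_Ψ ∈ ℝ^{k×m}, C_Ψ ∈ ℝ^{q×k}, D_Ψ ∈ ℝ^{q×m}, M = Mᵀ ∈ ℝ^{q×q}, and suppose M̃ := D_Ψᵀ M D_Ψ is invertible. (i) If Z̃ = Z̃ᵀ ∈ ℝ^{k×k} solves the algebraic Riccati equation A_Ψᵀ Z̃ + Z̃ A_Ψ + C_Ψᵀ M C_Ψ − (Z̃ B_Ψ + C_Ψᵀ M D_Ψ) M̃⁻¹ (B_Ψᵀ Z̃ + D_Ψᵀ M C_Ψ) = 0 and A_Ψ − B_Ψ M̃⁻¹ (B_Ψᵀ Z̃ + D_Ψᵀ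 M C_Ψ) is Hurwitz, then with C̃ := M̃⁻¹ (B_Ψᵀ Z̃ + D_Ψᵀ M C_Ψ) and D̃ := I_m, the quadruple (Z̃, M̃, C̃, D̃) certifies a canonical factorization of (A_Ψ, B_Ψ, C_Ψ, D_Ψ, M). (ii) Conversely, if some quadruple (Z̃, M̃', C̃, D̃) with invertible D̃ certifies a canonical factorization of (A_Ψ, B_Ψ, C_Ψ, D_Ψ, M), then Z̃ solves the above algebraic Riccati equation and A_Ψ − B_Ψ M̃⁻¹ (B_Ψᵀ Z̃ + D_Ψᵀ M C_Ψ) is Hurwitz. -/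
open MeasureTheory Matrix

noncomputable section

namespace IQCPaper

/-- Characterization of canonical factorization certificates via the algebraic
Riccati equation (Section 3.1). -/
theorem riccati_characterization
    {k m q : ℕ}
    (AΨ : Matrix (Fin k) (Fin k) ℝ) (BΨ : Matrix (Fin k) (Fin m) ℝ)
    (CΨ : Matrix (Fin q) (Fin k) ℝ) (DΨ : Matrix (Fin q) (Fin m) ℝ)
    (M : Matrix (Fin q) (Fin q) ℝ) (hM : M.IsSymm)
    (hMt : IsUnit (DΨᵀ * M * DΨ)) :
    (∀ Z' : Matrix (Fin k) (Fin k) ℝ, Z'.IsSymm →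
      AΨᵀ * Z' + Z' * AΨ + CΨᵀ * M * CΨ
          - (Z' * BΨ + CΨᵀ * M * DΨ) * (DΨᵀ * M * DΨ)⁻¹ * (BΨᵀ * Z' + DΨᵀ * M * CΨ) = 0 →
      IsHurwitz (AΨ - BΨ * ((DΨᵀ * M * DΨ)⁻¹ * (BΨᵀ * Z' + DΨᵀ * M * CΨ))) →
      CertifiesCanonical AΨ BΨ CΨ DΨ M Z' (DΨᵀ * M * DΨ)
        ((DΨᵀ * M * DΨ)⁻¹ * (BΨᵀ * Z' + DΨᵀ * M * CΨ)) 1)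
    ∧
    (∀ (Z' : Matrix (Fin k) (Fin k) ℝ) (M'' : Matrix (Fin m) (Fin m) ℝ)
        (C' : Matrix (Fin m) (Fin k) ℝ) (D' : Matrix (Fin m) (Fin m) ℝ),
      CertifiesCanonical AΨ BΨ CΨ DΨ M Z' M'' C' D' →
      (AΨᵀ * Z' + Z' * AΨ + CΨᵀ * M * CΨ
          - (Z' * BΨ + CΨᵀ * M * DΨ) * (DΨᵀ * M * DΨ)⁻¹ * (BΨᵀ * Z' + DΨᵀ * M * CΨ) = 0
        ∧ IsHurwitz (AΨ - BΨ * ((DΨᵀ * M * DΨ)⁻¹ * (BΨᵀ * Z' + DΨᵀ * M * CΨ))))) := by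
  constructor
  · intro Z' hZs hRic hHur
    set S : Matrix (Fin m) (Fin k) ℝ := BΨᵀ * Z' + DΨᵀ * M * CΨ with hS
    set N : Matrix (Fin m) (Fin m) ℝ := DΨᵀ * M * DΨ with hN
    have hNdet : IsUnit N.det := (Matrix.isUnit_iff_isUnit_det N).mp hMt
    have hNs : Nᵀ = N := by
      simp [hN, Matrix.transpose_mul, Matrix.transpose_transpose, hM.eq, Matrix.mul_assoc]
    have hNinvT : (N⁻¹)ᵀ = N⁻¹ := by
      rw [Matrix.transpose_nonsing_inv, hNs]
    have hNN' : N⁻¹ * N = 1 := Matrix.nonsing_inv_mul N hNdet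
    have hSt : Sᵀ = Z' * BΨ + CΨᵀ * M * DΨ := by
      simp [hS, Matrix.transpose_add, Matrix.transpose_mul, Matrix.transpose_transpose,
        hZs.eq, hM.eq, Matrix.mul_assoc]
    refine ⟨⟨hZs, ?_, ?_, ?_, ?_⟩, isUnit_one, ?_⟩
    · show Nᵀ = N; exact hNs
    · have key : (N⁻¹ * S)ᵀ * N * (N⁻¹ * S) = Sᵀ * (N⁻¹ * S) := by
        rw [Matrix.transpose_mul, hNinvT, Matrix.mul_assoc Sᵀ, hNN', Matrix.mul_one]
      rw [key, ← Matrix.mul_assoc, hSt]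
      exact sub_eq_zero.mp hRic
    · rw [Matrix.mul_one, Matrix.transpose_mul, hNinvT, Matrix.mul_assoc Sᵀ, hNN',
        Matrix.mul_one, hSt]
    · rw [Matrix.transpose_one, Matrix.mul_one, Matrix.one_mul]
    · simpa using hHur
  · rintro Z' M'' C' D' ⟨⟨hZs, hMs, h1, h2, h3⟩, hD, hH⟩
    set S : Matrix (Fin m) (Fin k) ℝ := BΨᵀ * Z' + DΨᵀ * M * CΨ with hS
    set N : Matrix (Fin m) (Fin m) ℝ := DΨᵀ * M * DΨ with hN
    have hNdet : IsUnit N.det := (Matrix.isUnit_iff_isUnit_det N).mp hMt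
    have hNN' : N⁻¹ * N = 1 := Matrix.nonsing_inv_mul N hNdet
    have hDdet : IsUnit D'.det := (Matrix.isUnit_iff_isUnit_det D').mp hD
    have hSeq : S = D'ᵀ * M'' * C' := by
      have := congrArg Matrix.transpose h2
      simpa [hS, Matrix.transpose_add, Matrix.transpose_mul, Matrix.transpose_transpose,
        hZs.eq, hM.eq, hMs.eq, Matrix.mul_assoc] using this
    have h4 : N * (D'⁻¹ * C') = S := by
      rw [h3, hSeq, Matrix.mul_assoc (D'ᵀ * M''), ← Matrix.mul_assoc D',
        Matrix.mul_nonsing_inv _ hDdet, Matrix.one_mul]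
    have hNinvS : N⁻¹ * S = D'⁻¹ * C' := by
      rw [← h4, ← Matrix.mul_assoc, hNN', Matrix.one_mul]
    constructor
    · rw [Matrix.mul_assoc (Z' * BΨ + CΨᵀ * M * DΨ), hNinvS]
      have hSt : Z' * BΨ + CΨᵀ * M * DΨ = C'ᵀ * M'' * D' := h2
      rw [hSt, Matrix.mul_assoc (C'ᵀ * M''), ← Matrix.mul_assoc D',
        Matrix.mul_nonsing_inv _ hDdet, Matrix.one_mul, h1, sub_self]
    · have heq : AΨ - BΨ * (N⁻¹ * S) = AΨ - BΨ * D'⁻¹ * C' := by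
        rw [hNinvS, Matrix.mul_assoc]
      rw [heq]
      exact hH

end IQCPaper
end
end

section
/- (Finsler step, Section 2.2: passing from the KYP certificate to the performance LMI). Let (A, B, C, D) be system matrices (A ∈ ℝ^{n×n}, B ∈ ℝ^{n×nw}, C ∈ ℝ^{nz×n}, D ∈ ℝ^{nz×nw}), let (A_Ψ, B_Ψ, C_Ψ, D_Ψ) be filter matrices with nz+nw inputs and q outputs, M = Mᵀ ∈ ℝ^{q×q}, and let (𝒜, ℬ, 𝒞, 𝒟) be the combined realization. If 𝒳 = 𝒳ᵀ satisfies KYP(𝒳, M; 𝒜, ℬ, 𝒞, 𝒟) ≺ 0, then there exists γ > 0 such that KYP(𝒳, diag(M, γ⁻¹ I_{nz}, −γ I_{nz}); 𝒜, ℬ', 𝒞', 𝒟') ≺ 0, where, with E := [I_{nz}; 0_{nw×nz}], ℬ' := [[B_Ψ D_F, B_Ψ E],[B, 0_{n×nz}]], 𝒞' := [[C_Ψ, D_Ψ C_F],[0_{nz×k}, C],[0_{nz×k}, 0_{nz×n}]], and 𝒟' := [[D_Ψ D_F, D_Ψ E],[D, I_{nz}],[0_{nz×nw}, I_{nz}]].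 -/
open MeasureTheory Matrix

noncomputable section

/-!
Splitting the multiplier `diag(M, γ⁻¹ I, -γ I)` blockwise gives
`-KYP' = -K + γ • Gᵀ * G - γ⁻¹ • H`, where `K` is the KYP matrix of the realization with the extra
input `s` appended, `G` reads off `s`, and `H` does not depend on `γ`. At `s = 0` the quadratic form
of `-K` is that of the given certificate, so `-K` is positive on the kernel of `G`. Finsler's lemma,
proved by compactness of the unit sphere, makes `-K + γ • Gᵀ * G - γ⁻¹ • H` positive definite once
`γ` is large.
-/

theorem IsCompact.exists_pos_forall_add_mul_sub_inv_mul_pos {X : Type*} [TopologicalSpace X]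
    {K : Set X} (hK : IsCompact K) {p e h : X → ℝ} (hp : Continuous p) (he : Continuous e)
    (hh : Continuous h) (he_nonneg : ∀ x ∈ K, 0 ≤ e x) (hpe : ∀ x ∈ K, e x = 0 → 0 < p x) :
    ∃ γ : ℝ, 0 < γ ∧ ∀ x ∈ K, 0 < p x + γ * e x - γ⁻¹ * h x := by
  -- `p ≥ δ` on the zero set of `e`, hence `e ≥ m > 0` wherever `p ≤ δ / 2`.
  obtain ⟨δ, hδ, hpδ⟩ := (hK.inter_right (isClosed_eq he continuous_const)).exists_forall_le'
    hp.continuousOn fun x hx ↦ hpe x hx.1 hx.2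
  obtain ⟨m, hm, hem⟩ := (hK.inter_right (isClosed_le hp continuous_const)).exists_forall_le'
    (a := 0) (s := K ∩ {x | p x ≤ δ / 2}) he.continuousOn fun x hx ↦
      (he_nonneg x hx.1).lt_of_ne' fun he0 ↦ by linarith [hpδ x ⟨hx.1, he0⟩, hx.2.out]
  obtain ⟨cp, hcp⟩ := hK.exists_bound_of_continuousOn hp.continuousOn
  obtain ⟨ch, hch⟩ := hK.exists_bound_of_continuousOn hh.continuousOn
  obtain ⟨γ, hγ⟩ := exists_gt (max 1 (max ((cp + ch) / m) (2 * ch / δ)))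
  simp only [max_lt_iff, div_lt_iff₀ hm, div_lt_iff₀ hδ] at hγ
  obtain ⟨hγ1, hγm, hγδ⟩ := hγ
  have hγ0 : 0 < γ := one_pos.trans hγ1
  refine ⟨γ, hγ0, fun x hx ↦ ?_⟩
  obtain ⟨hpx, -⟩ := abs_le.1 (hcp x hx)
  obtain ⟨-, hhx⟩ := abs_le.1 (hch x hx)
  have hch0 : 0 ≤ ch := (norm_nonneg _).trans (hch x hx)
  have hhx' : γ⁻¹ * h x ≤ γ⁻¹ * ch := by gcongr
  have hγe := mul_nonneg hγ0.le (he_nonneg x hx)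
  rcases le_or_gt (p x) (δ / 2) with hsmall | hlarge
  · have hme : γ * m ≤ γ * e x := by gcongr; exact hem x ⟨hx, hsmall⟩
    have : γ⁻¹ * ch ≤ ch := by rw [inv_mul_le_iff₀ hγ0]; nlinarith
    linarith
  · have : γ⁻¹ * ch < δ / 2 := by rw [inv_mul_lt_iff₀ hγ0]; linarith
    linarith

namespace Matrix

variable {ι κ : Type*} [Fintype ι] [Fintype κ]

theorem posDef_of_forall_mem_sphere {Q : Matrix ι ι ℝ} (hQ : Q.IsSymm)
    (hpos : ∀ u ∈ Metric.sphere (0 : ι → ℝ) 1, 0 < u ⬝ᵥ Q *ᵥ u) : Q.PosDef := by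
  refine posDef_iff_dotProduct_mulVec.2 ⟨isHermitian_iff_isSymm.2 hQ, fun x hx ↦ ?_⟩
  have hnx : 0 < ‖x‖ := norm_pos_iff.2 hx
  have hu : ‖x‖⁻¹ • x ∈ Metric.sphere (0 : ι → ℝ) 1 := by
    simp [norm_smul, hnx.ne']
  have hx_eq : x = ‖x‖ • ‖x‖⁻¹ • x := by rw [smul_smul, mul_inv_cancel₀ hnx.ne', one_smul]
  rw [star_trivial, hx_eq, mulVec_smul, smul_dotProduct, dotProduct_smul, smul_eq_mul,
    smul_eq_mul]
  have := hpos _ hu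
  positivity

theorem dotProduct_add_smul_sub_inv_smul_mulVec (P H : Matrix ι ι ℝ) (G : Matrix κ ι ℝ)
    (γ : ℝ) (x : ι → ℝ) :
    x ⬝ᵥ (P + γ • (Gᵀ * G) - γ⁻¹ • H) *ᵥ x =
      x ⬝ᵥ P *ᵥ x + γ * ((G *ᵥ x) ⬝ᵥ (G *ᵥ x)) - γ⁻¹ * (x ⬝ᵥ H *ᵥ x) := by
  simp only [sub_mulVec, add_mulVec, smul_mulVec, ← mulVec_mulVec, dotProduct_sub,
    dotProduct_add, dotProduct_smul, dotProduct_mulVec x Gᵀ, vecMul_transpose, smul_eq_mul]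

/-- Finsler's lemma, allowing a perturbation `-γ⁻¹ • H` that vanishes as `γ` grows. -/
theorem exists_posDef_add_smul_sub_inv_smul {P H : Matrix ι ι ℝ} (G : Matrix κ ι ℝ)
    (hP : P.IsSymm) (hH : H.IsSymm) (hPG : ∀ x ≠ 0, G *ᵥ x = 0 → 0 < x ⬝ᵥ P *ᵥ x) :
    ∃ γ : ℝ, 0 < γ ∧ (P + γ • (Gᵀ * G) - γ⁻¹ • H).PosDef := by
  obtain ⟨γ, hγ, hpos⟩ :=
    (isCompact_sphere (0 : ι → ℝ) 1).exists_pos_forall_add_mul_sub_inv_mul_pos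
      (p := fun x ↦ x ⬝ᵥ P *ᵥ x) (e := fun x ↦ (G *ᵥ x) ⬝ᵥ (G *ᵥ x)) (h := fun x ↦ x ⬝ᵥ H *ᵥ x)
      (by fun_prop) (by fun_prop) (by fun_prop)
      (fun x _ ↦ by simpa using dotProduct_star_self_nonneg (G *ᵥ x))
      fun x hx he ↦ hPG x (ne_zero_of_mem_unit_sphere ⟨x, hx⟩) (dotProduct_self_eq_zero.1 he)
  refine ⟨γ, hγ, posDef_of_forall_mem_sphere ?_ fun u hu ↦ ?_⟩
  · have hG : (Gᵀ * G).IsSymm := by rw [IsSymm, transpose_mul, transpose_transpose]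
    exact (hP.add (hG.smul γ)).sub (hH.smul γ⁻¹)
  · simpa only [dotProduct_add_smul_sub_inv_smul_mulVec] using hpos u hu

end Matrix

namespace IQCPaper

section KYP

variable {α β κ κ' : Type*} [Fintype α] [Fintype β] [Fintype κ] [Fintype κ']

theorem KYP_zero (M : Matrix κ κ ℝ) (A : Matrix α α ℝ) (B : Matrix α β ℝ)
    (C : Matrix κ α ℝ) (D : Matrix κ β ℝ) :
    KYP 0 M A B C D = (fromCols C D)ᵀ * M * fromCols C D := by
  simp [KYP, transpose_fromCols, fromRows_mul, mul_fromCols]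

theorem KYP_fromBlocks_zero_zero (X : Matrix α α ℝ) (M₁ : Matrix κ κ ℝ) (M₂ : Matrix κ' κ' ℝ)
    (A : Matrix α α ℝ) (B : Matrix α β ℝ) (C₁ : Matrix κ α ℝ) (C₂ : Matrix κ' α ℝ)
    (D₁ : Matrix κ β ℝ) (D₂ : Matrix κ' β ℝ) :
    KYP X (fromBlocks M₁ 0 0 M₂) A B (fromRows C₁ C₂) (fromRows D₁ D₂) =
      KYP X M₁ A B C₁ D₁ + KYP 0 M₂ A B C₂ D₂ := by
  simp [KYP, transpose_fromRows, fromCols_mul_fromBlocks, fromCols_mul_fromRows, fromBlocks_add,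
    add_assoc]

theorem KYP_zero_smul (c : ℝ) (M : Matrix κ κ ℝ) (A : Matrix α α ℝ) (B : Matrix α β ℝ)
    (C : Matrix κ α ℝ) (D : Matrix κ β ℝ) :
    KYP 0 (c • M) A B C D = c • KYP 0 M A B C D := by
  simp [KYP_zero, Matrix.mul_smul, Matrix.smul_mul]

theorem isSymm_KYP {X : Matrix α α ℝ} {M : Matrix κ κ ℝ} (hX : X.IsSymm) (hM : M.IsSymm)
    (A : Matrix α α ℝ) (B : Matrix α β ℝ) (C : Matrix κ α ℝ) (D : Matrix κ β ℝ) :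
    (KYP X M A B C D).IsSymm := by
  refine IsSymm.fromBlocks ?_ ?_ ?_ <;>
    simp [IsSymm, transpose_mul, hX.eq, hM.eq, Matrix.mul_assoc, add_comm]

theorem sumElim_dotProduct_KYP_mulVec (X : Matrix α α ℝ) (M : Matrix κ κ ℝ) (A : Matrix α α ℝ)
    (B : Matrix α β ℝ) (C : Matrix κ α ℝ) (D : Matrix κ β ℝ) (a : α → ℝ) (b : β → ℝ) :
    Sum.elim a b ⬝ᵥ KYP X M A B C D *ᵥ Sum.elim a b =
      (A *ᵥ a + B *ᵥ b) ⬝ᵥ X *ᵥ a + a ⬝ᵥ X *ᵥ (A *ᵥ a + B *ᵥ b)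
        + (C *ᵥ a + D *ᵥ b) ⬝ᵥ M *ᵥ (C *ᵥ a + D *ᵥ b) := by
  simp only [KYP, fromBlocks_mulVec, sumElim_dotProduct_sumElim, add_mulVec, ← mulVec_mulVec,
    dotProduct_add, add_dotProduct, mulVec_add, dotProduct_mulVec _ (_ᵀ), vecMul_transpose,
    Sum.elim_comp_inl, Sum.elim_comp_inr]
  ring

theorem sumElim_dotProduct_KYP_fromCols_mulVec_sumElim_zero (X : Matrix α α ℝ)
    (M : Matrix κ κ ℝ) (A : Matrix α α ℝ) (B : Matrix α β ℝ) (B₂ : Matrix α κ' ℝ)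
    (C : Matrix κ α ℝ) (D : Matrix κ β ℝ) (D₂ : Matrix κ κ' ℝ) (a : α → ℝ) (b : β → ℝ) :
    Sum.elim a (Sum.elim b 0) ⬝ᵥ KYP X M A (fromCols B B₂) C (fromCols D D₂) *ᵥ
        Sum.elim a (Sum.elim b 0) =
      Sum.elim a b ⬝ᵥ KYP X M A B C D *ᵥ Sum.elim a b := by
  simp only [sumElim_dotProduct_KYP_mulVec, fromCols_mulVec_sumElim, mulVec_zero, add_zero]

end KYP

theorem exists_posDef_neg_KYP_augmented {α β κ ζ : Type*} [Fintype α] [Fintype β] [Fintype κ]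
    [Fintype ζ] [DecidableEq ζ] {X : Matrix α α ℝ} {M : Matrix κ κ ℝ} (hX : X.IsSymm)
    (hM : M.IsSymm) (A : Matrix α α ℝ) (B : Matrix α β ℝ) (B₂ : Matrix α ζ ℝ)
    (C : Matrix κ α ℝ) (D : Matrix κ β ℝ) (D₂ : Matrix κ ζ ℝ) (C' : Matrix ζ α ℝ)
    (D' : Matrix ζ β ℝ) (hKYP : (-KYP X M A B C D).PosDef) :
    ∃ γ : ℝ, 0 < γ ∧
      (-KYP X (fromBlocks M 0 0
          (fromBlocks (γ⁻¹ • (1 : Matrix ζ ζ ℝ)) 0 0 (-γ • (1 : Matrix ζ ζ ℝ))))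
        A (fromCols B B₂) (fromRows C (fromRows C' 0))
        (fromRows (fromCols D D₂) (fromRows (fromCols D' 1) (fromCols 0 1)))).PosDef := by
  have hnull : ∀ x ≠ 0, fromCols (0 : Matrix ζ α ℝ) (fromCols (0 : Matrix ζ β ℝ) 1) *ᵥ x = 0 →
      0 < x ⬝ᵥ (-KYP X M A (fromCols B B₂) C (fromCols D D₂)) *ᵥ x := by
    intro x hx hGx
    obtain ⟨a, w, s, rfl⟩ : ∃ a w s, x = Sum.elim a (Sum.elim w s) :=
      ⟨_, _, _, by ext (i | i | i) <;> rfl⟩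
    simp only [fromCols_mulVec_sumElim, zero_mulVec, one_mulVec, zero_add] at hGx
    subst hGx
    have haw : Sum.elim a w ≠ 0 := by
      rintro h0
      obtain ⟨rfl, rfl⟩ := Sum.elim_eq_iff.1 (h0.trans Sum.elim_zero_zero.symm)
      exact hx (by simp)
    rw [neg_mulVec, dotProduct_neg, sumElim_dotProduct_KYP_fromCols_mulVec_sumElim_zero,
      ← dotProduct_neg, ← neg_mulVec]
    simpa using hKYP.dotProduct_mulVec_pos haw
  obtain ⟨γ, hγ, hpd⟩ := exists_posDef_add_smul_sub_inv_smul _ (isSymm_KYP hX hM _ _ _ _).neg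
    (isSymm_KYP isSymm_zero isSymm_one A (fromCols B B₂) C' (fromCols D' 1)) hnull
  refine ⟨γ, hγ, ?_⟩
  convert hpd using 1
  rw [KYP_fromBlocks_zero_zero, KYP_fromBlocks_zero_zero, KYP_zero_smul, KYP_zero_smul,
    KYP_zero 1 A _ 0, Matrix.mul_one]
  module

/-- Finsler step (Section 2.2): passing from the KYP certificate to the performance LMI. -/
theorem finsler_step
    {n nw nz k q : ℕ}
    (A : Matrix (Fin n) (Fin n) ℝ) (B : Matrix (Fin n) (Fin nw) ℝ)
    (C : Matrix (Fin nz) (Fin n) ℝ) (D : Matrix (Fin nz) (Fin nw) ℝ)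
    (AΨ : Matrix (Fin k) (Fin k) ℝ) (BΨ : Matrix (Fin k) (Fin nz ⊕ Fin nw) ℝ)
    (CΨ : Matrix (Fin q) (Fin k) ℝ) (DΨ : Matrix (Fin q) (Fin nz ⊕ Fin nw) ℝ)
    (M : Matrix (Fin q) (Fin q) ℝ) (hM : M.IsSymm)
    (𝒳 : Matrix (Fin k ⊕ Fin n) (Fin k ⊕ Fin n) ℝ) (h𝒳 : 𝒳.IsSymm)
    (hKYP : (-(KYP 𝒳 M
        (fromBlocks AΨ (BΨ * fromRows C 0) 0 A)
        (fromRows (BΨ * fromRows D 1) B)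
        (fromCols CΨ (DΨ * fromRows C 0))
        (DΨ * fromRows D 1))).PosDef) :
    ∃ γ : ℝ, 0 < γ ∧
      (-(KYP 𝒳
          (fromBlocks M 0 0
            (fromBlocks (γ⁻¹ • (1 : Matrix (Fin nz) (Fin nz) ℝ)) 0 0
              (-γ • (1 : Matrix (Fin nz) (Fin nz) ℝ))))
          (fromBlocks AΨ (BΨ * fromRows C 0) 0 A)
          (fromBlocks (BΨ * fromRows D 1)
            (BΨ * fromRows (1 : Matrix (Fin nz) (Fin nz) ℝ)
              (0 : Matrix (Fin nw) (Fin nz) ℝ)) B 0)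
          (fromRows (fromCols CΨ (DΨ * fromRows C 0))
            (fromRows (fromCols 0 C) 0))
          (fromRows
            (fromCols (DΨ * fromRows D 1)
              (DΨ * fromRows (1 : Matrix (Fin nz) (Fin nz) ℝ)
                (0 : Matrix (Fin nw) (Fin nz) ℝ)))
            (fromRows (fromCols D 1) (fromCols 0 1))))).PosDef := by
  obtain ⟨γ, hγ, hpd⟩ := exists_posDef_neg_KYP_augmented h𝒳 hM
    (fromBlocks AΨ (BΨ * fromRows C 0) 0 A) (fromRows (BΨ * fromRows D 1) B)
    (fromRows (BΨ * fromRows (1 : Matrix (Fin nz) (Fin nz) ℝ) 0) 0)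
    (fromCols CΨ (DΨ * fromRows C 0)) (DΨ * fromRows D 1)
    (DΨ * fromRows (1 : Matrix (Fin nz) (Fin nz) ℝ) 0) (fromCols 0 C) D hKYP
  exact ⟨γ, hγ, by rwa [fromCols_fromRows_eq_fromBlocks] at hpd⟩

end IQCPaper
end
end

section
/- (Transfer of the factorization identities to the combined realization, identity (are2)). Let (A_Ψ, B_Ψ, C_Ψ, D_Ψ) be filter matrices with nz+nw inputs, M = Mᵀ, and suppose (Z̃, M̃, C̃, D̃) satisfies the factorization identities for (A_Ψ, B_Ψ, C_Ψ, D_Ψ, M). Let (A, B, C, D) be system matrices, (𝒜, ℬ, 𝒞, 𝒟) the combined realization, and set 𝒵 := diag(Z̃, 0_{n×n}), 𝒞̃ := [C̃, D̃ C_F], 𝒟̃ := D̃ D_F. Then 𝒜ᵀ 𝒵 + 𝒵 𝒜 + 𝒞ᵀ M 𝒞 = 𝒞̃ᵀ M̃ 𝒞̃, 𝒵 ℬ + 𝒞ᵀ M 𝒟 = 𝒞̃ᵀ M̃ 𝒟̃, and 𝒟ᵀ M 𝒟 = 𝒟̃ᵀ M̃ 𝒟̃; equivalently, KYP(𝒵,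 M; 𝒜, ℬ, 𝒞, 𝒟) = [𝒞̃, 𝒟̃]ᵀ M̃ [𝒞̃, 𝒟̃]. -/
open MeasureTheory Matrix

noncomputable section

namespace IQCPaper

/-- The stacked matrix `C_F = [C; 0]`. -/
def CFmat {n nw nz : ℕ} (C : Matrix (Fin nz) (Fin n) ℝ) :
    Matrix (Fin nz ⊕ Fin nw) (Fin n) ℝ :=
  fromRows C 0

/-- The stacked matrix `D_F = [D; I]`. -/
def DFmat {nw nz : ℕ} (D : Matrix (Fin nz) (Fin nw) ℝ) :
    Matrix (Fin nz ⊕ Fin nw) (Fin nw) ℝ :=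
  fromRows D 1

/-! Because `𝒵 = diag(Z̃, 0)` does not see the plant state, the KYP form of the combined
realization is the filter's KYP form pulled back along `T : (ξ, x, w) ↦ (ξ, C_F x + D_F w)`.
By the factorization identities (and the symmetry of `Z̃`, `M`, `M̃` for the lower-left block)
the filter's KYP form is `[C̃, D̃]ᵀ M̃ [C̃, D̃]`, so the combined one is
`([C̃, D̃] T)ᵀ M̃ ([C̃, D̃] T)` with `[C̃, D̃] T = [𝒞̃, 𝒟̃]`. The three identities are its blocks. -/

section

variable {R : Type*} {k n m w q r : Type*}

theorem transpose_fromCols_mul_fromCols [CommSemiring R] [Fintype q] {a b : Type*}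
    (X : Matrix q a R) (Y : Matrix q b R) (N : Matrix q q R) :
    (fromCols X Y)ᵀ * N * fromCols X Y
      = fromBlocks (Xᵀ * N * X) (Xᵀ * N * Y) (Yᵀ * N * X) (Yᵀ * N * Y) := by
  rw [transpose_fromCols, fromRows_mul, fromRows_mul_fromCols]

theorem FactIds.kyp_eq [Fintype k] [Fintype m] [Fintype q] {A : Matrix k k ℝ}
    {B : Matrix k m ℝ} {C : Matrix q k ℝ} {D : Matrix q m ℝ} {M : Matrix q q ℝ}
    {Z : Matrix k k ℝ} {M' : Matrix m m ℝ} {C' : Matrix m k ℝ} {D' : Matrix m m ℝ}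
    (h : FactIds A B C D M Z M' C' D') (hM : M.IsSymm) :
    KYP Z M A B C D = (fromCols C' D')ᵀ * M' * fromCols C' D' := by
  obtain ⟨hZ, hM', hA, hB, hD⟩ := h
  have hBt : Bᵀ * Z + Dᵀ * M * C = D'ᵀ * M' * C' := by
    simpa only [transpose_add, transpose_mul, transpose_transpose, hZ.eq, hM.eq, hM'.eq,
      Matrix.mul_assoc] using congrArg transpose hB
  rw [KYP, transpose_fromCols_mul_fromCols, hA, hB, hBt, hD]

/-- The map `T : (ξ, x, w) ↦ (ξ, E x + F w)`; for `E = C_F`, `F = D_F` it expresses the filter's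
state and input through the state and input of the combined realization. -/
def seriesInput (k : Type*) [DecidableEq k] [Zero R] [One R] (E : Matrix m n R)
    (F : Matrix m w R) : Matrix (k ⊕ m) ((k ⊕ n) ⊕ w) R :=
  fromCols (fromBlocks 1 0 0 E) (fromRows 0 F)

variable [DecidableEq k]

theorem fromCols_mul_seriesInput [Semiring R] [Fintype k] [Fintype m] (C' : Matrix r k R)
    (D' : Matrix r m R) (E : Matrix m n R) (F : Matrix m w R) :
    fromCols C' D' * seriesInput k E F = fromCols (fromCols C' (D' * E)) (D' * F) := by
  simp only [seriesInput, mul_fromCols, fromCols_mul_fromBlocks, fromCols_mul_fromRows,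
    Matrix.mul_one, Matrix.mul_zero, add_zero, zero_add]

theorem kyp_series_eq_conj [Fintype k] [Fintype n] [Fintype m] [Fintype w] [Fintype q]
    (Z : Matrix k k ℝ) (M : Matrix q q ℝ) (AΨ : Matrix k k ℝ) (BΨ : Matrix k m ℝ)
    (CΨ : Matrix q k ℝ) (DΨ : Matrix q m ℝ) (A : Matrix n n ℝ) (B : Matrix n w ℝ)
    (E : Matrix m n ℝ) (F : Matrix m w ℝ) :
    KYP (fromBlocks Z 0 0 0) M (fromBlocks AΨ (BΨ * E) 0 A) (fromRows (BΨ * F) B)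
        (fromCols CΨ (DΨ * E)) (DΨ * F)
      = (seriesInput k E F)ᵀ * KYP Z M AΨ BΨ CΨ DΨ * seriesInput k E F := by
  simp only [KYP, seriesInput, transpose_fromCols, transpose_fromRows, fromBlocks_transpose,
    fromRows_mul, fromBlocks_multiply, fromCols_mul_fromBlocks, fromBlocks_mul_fromRows,
    fromCols_mul_fromRows, mul_fromCols, transpose_mul, fromBlocks_add, transpose_zero,
    transpose_one, fromCols_fromRows_eq_fromBlocks, Matrix.mul_add, Matrix.add_mul,
    Matrix.mul_assoc, Matrix.one_mul, Matrix.zero_mul, Matrix.mul_zero, add_zero, zero_add]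
  ext ((i | i) | i) ((j | j) | j) <;> simp

theorem FactIds.kyp_series_eq [Fintype k] [Fintype n] [Fintype m] [Fintype w] [Fintype q]
    {AΨ : Matrix k k ℝ} {BΨ : Matrix k m ℝ} {CΨ : Matrix q k ℝ} {DΨ : Matrix q m ℝ}
    {M : Matrix q q ℝ} {Z : Matrix k k ℝ} {M' : Matrix m m ℝ} {C' : Matrix m k ℝ}
    {D' : Matrix m m ℝ} (h : FactIds AΨ BΨ CΨ DΨ M Z M' C' D') (hM : M.IsSymm)
    (A : Matrix n n ℝ) (B : Matrix n w ℝ) (E : Matrix m n ℝ) (F : Matrix m w ℝ) :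
    KYP (fromBlocks Z 0 0 0) M (fromBlocks AΨ (BΨ * E) 0 A) (fromRows (BΨ * F) B)
        (fromCols CΨ (DΨ * E)) (DΨ * F)
      = (fromCols (fromCols C' (D' * E)) (D' * F))ᵀ * M'
          * fromCols (fromCols C' (D' * E)) (D' * F) := by
  rw [kyp_series_eq_conj, h.kyp_eq hM, ← fromCols_mul_seriesInput]
  simp only [transpose_mul, Matrix.mul_assoc]

end

/-- Transfer of the factorization identities to the combined realization (identity (are2)). -/
theorem factorization_combined_realization
    {n nw nz k q : ℕ}
    (A : Matrix (Fin n) (Fin n) ℝ) (B : Matrix (Fin n) (Fin nw) ℝ)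
    (C : Matrix (Fin nz) (Fin n) ℝ) (D : Matrix (Fin nz) (Fin nw) ℝ)
    (AΨ : Matrix (Fin k) (Fin k) ℝ) (BΨ : Matrix (Fin k) (Fin nz ⊕ Fin nw) ℝ)
    (CΨ : Matrix (Fin q) (Fin k) ℝ) (DΨ : Matrix (Fin q) (Fin nz ⊕ Fin nw) ℝ)
    (M : Matrix (Fin q) (Fin q) ℝ) (hM : M.IsSymm)
    (Z' : Matrix (Fin k) (Fin k) ℝ)
    (M' : Matrix (Fin nz ⊕ Fin nw) (Fin nz ⊕ Fin nw) ℝ)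
    (C' : Matrix (Fin nz ⊕ Fin nw) (Fin k) ℝ)
    (D' : Matrix (Fin nz ⊕ Fin nw) (Fin nz ⊕ Fin nw) ℝ)
    (hfact : FactIds AΨ BΨ CΨ DΨ M Z' M' C' D') :
    ((fromBlocks AΨ (BΨ * CFmat C) 0 A)ᵀ * (fromBlocks Z' 0 0 0)
          + (fromBlocks Z' 0 0 0) * (fromBlocks AΨ (BΨ * CFmat C) 0 A)
          + (fromCols CΨ (DΨ * CFmat C))ᵀ * M * fromCols CΨ (DΨ * CFmat C)
        = (fromCols C' (D' * CFmat C))ᵀ * M' * fromCols C' (D' * CFmat C))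
      ∧ ((fromBlocks Z' 0 0 0) * fromRows (BΨ * DFmat D) B
            + (fromCols CΨ (DΨ * CFmat C))ᵀ * M * (DΨ * DFmat D)
          = (fromCols C' (D' * CFmat C))ᵀ * M' * (D' * DFmat D))
      ∧ ((DΨ * DFmat D)ᵀ * M * (DΨ * DFmat D) = (D' * DFmat D)ᵀ * M' * (D' * DFmat D))
      ∧ KYP (fromBlocks Z' 0 0 0) M
            (fromBlocks AΨ (BΨ * CFmat C) 0 A)
            (fromRows (BΨ * DFmat D) B)
            (fromCols CΨ (DΨ * CFmat C))
            (DΨ * DFmat D)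
          = (fromCols (fromCols C' (D' * CFmat C)) (D' * DFmat D))ᵀ * M'
              * fromCols (fromCols C' (D' * CFmat C)) (D' * DFmat D) := by
  have hKYP := hfact.kyp_series_eq hM A B (CFmat C) (DFmat D)
  refine ⟨?_, ?_, ?_, hKYP⟩ <;>
    rw [KYP, transpose_fromCols_mul_fromCols _ (D' * DFmat D), fromBlocks_inj] at hKYP
  exacts [hKYP.1, hKYP.2.1, hKYP.2.2.2]

end IQCPaper
end
end

section
/- (Shifted KYP certificate, first inequality of (kyph)). Let (A_Ψ, B_Ψ, C_Ψ, D_Ψ) be filter matrices with nz+nw inputs, M = Mᵀ, suppose (Z̃, M̃, C̃, D̃) satisfies the factorization identities for (A_Ψ, B_Ψ, C_Ψ, D_Ψ, M), let (A, B, C, D) be system matrices and (𝒜, ℬ, 𝒞, 𝒟) the combined realization, and set 𝒞̃ := [C̃, D̃ C_F], 𝒟̃ := D̃ D_F. If 𝒳 = 𝒳ᵀ satisfies KYP(𝒳, M; 𝒜, ℬ, 𝒞, 𝒟) ≺ 0, then 𝒳̃ := 𝒳 − diag(Z̃, 0_{n×n}) satisfies KYP(𝒳̃, M̃; 𝒜,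 ℬ, 𝒞̃, 𝒟̃) ≺ 0. -/
open MeasureTheory Matrix

noncomputable section

namespace IQCPaper

/-!
Both KYP matrices in the theorem are equal. Write `KYP(X, M; A, B, C, D)` as the storage term
`[[AᵀX + XA, XB], [BᵀX, 0]]` (linear in `X`) plus the supply term `[C D]ᵀ M [C D]`. The
factorization identities say precisely that `KYP(Z̃, M; A_Ψ, B_Ψ, C_Ψ, D_Ψ) = [C̃ D̃]ᵀ M̃ [C̃ D̃]`.
The filter is driven by the interconnection: with `P = [I 0]`, `F = [0 C_F]` and
`T = [[P, 0], [F, D_F]]` we have `P𝒜 = A_Ψ P + B_Ψ F`, `Pℬ = B_Ψ D_F`, `[𝒞 𝒟] = [C_Ψ D_Ψ] T` and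
`[𝒞̃ 𝒟̃] = [C̃ D̃] T`. Conjugating the factorization by `T` therefore trades the supply term of
`M̃` for that of `M` plus the storage term of `PᵀZ̃P = diag(Z̃, 0)`.
-/

theorem fromCols_add_fromCols {R ι κ₁ κ₂ : Type*} [Add R] (A₁ A₂ : Matrix ι κ₁ R)
    (B₁ B₂ : Matrix ι κ₂ R) :
    fromCols A₁ B₁ + fromCols A₂ B₂ = fromCols (A₁ + A₂) (B₁ + B₂) := by
  ext i (j | j) <;> rfl

theorem fromCols_mul_fromBlocks_zero {R ι κ₁ κ₂ ν₁ ν₂ : Type*} [Semiring R] [Fintype κ₁]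
    [Fintype κ₂] (C : Matrix ι κ₁ R) (D : Matrix ι κ₂ R) (P : Matrix κ₁ ν₁ R)
    (F : Matrix κ₂ ν₁ R) (G : Matrix κ₂ ν₂ R) :
    fromCols C D * fromBlocks P 0 F G = fromCols (C * P + D * F) (D * G) := by
  rw [fromCols_mul_fromBlocks, Matrix.mul_zero, zero_add]

variable {n m k l q : Type*} [Fintype n] [Fintype k] [Fintype l] [Fintype q]

def kypStorage (X A : Matrix n n ℝ) (B : Matrix n m ℝ) : Matrix (n ⊕ m) (n ⊕ m) ℝ :=
  fromBlocks (Aᵀ * X + X * A) (X * B) (Bᵀ * X) 0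

theorem KYP_eq_kypStorage_add [Fintype m] (X : Matrix n n ℝ) (M : Matrix q q ℝ)
    (A : Matrix n n ℝ) (B : Matrix n m ℝ) (C : Matrix q n ℝ) (D : Matrix q m ℝ) :
    KYP X M A B C D = kypStorage X A B + (fromCols C D)ᵀ * M * fromCols C D := by
  rw [KYP, kypStorage, transpose_fromCols, fromRows_mul, fromRows_mul_fromCols, fromBlocks_add]
  simp only [Matrix.mul_assoc, zero_add]

theorem kypStorage_sub (X Y A : Matrix n n ℝ) (B : Matrix n m ℝ) :
    kypStorage (X - Y) A B = kypStorage X A B - kypStorage Y A B := by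
  simp only [kypStorage, sub_eq_add_neg, fromBlocks_neg, fromBlocks_add, Matrix.mul_add,
    Matrix.add_mul, Matrix.mul_neg, Matrix.neg_mul, neg_zero, add_zero]
  congr 1
  abel

theorem FactIds.KYP_eq [Fintype m] {AΨ : Matrix k k ℝ} {BΨ : Matrix k m ℝ}
    {CΨ : Matrix q k ℝ} {DΨ : Matrix q m ℝ} {M : Matrix q q ℝ} {Z' : Matrix k k ℝ}
    {M' : Matrix m m ℝ} {C' : Matrix m k ℝ} {D' : Matrix m m ℝ}
    (h : FactIds AΨ BΨ CΨ DΨ M Z' M' C' D') (hM : M.IsSymm) :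
    KYP Z' M AΨ BΨ CΨ DΨ = (fromCols C' D')ᵀ * M' * fromCols C' D' := by
  obtain ⟨hZ', hM', hA, hB, hD⟩ := h
  have hBt : BΨᵀ * Z' + DΨᵀ * M * CΨ = D'ᵀ * M' * C' := by
    simpa only [transpose_add, transpose_mul, hZ'.eq, hM.eq, hM'.eq, transpose_transpose,
      Matrix.mul_assoc] using congrArg transpose hB
  rw [KYP, transpose_fromCols, fromRows_mul, fromRows_mul_fromCols, hA, hB, hBt, hD]

theorem kypStorage_conj_fromBlocks {A : Matrix n n ℝ} {B : Matrix n m ℝ} {AΨ : Matrix k k ℝ}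
    {BΨ : Matrix k l ℝ} {P : Matrix k n ℝ} {F : Matrix l n ℝ} {G : Matrix l m ℝ}
    (hA : P * A = AΨ * P + BΨ * F) (hB : P * B = BΨ * G) (Z : Matrix k k ℝ) :
    (fromBlocks P 0 F G)ᵀ * kypStorage Z AΨ BΨ * fromBlocks P 0 F G
      = kypStorage (Pᵀ * Z * P) A B := by
  have hAt : Aᵀ * Pᵀ = Pᵀ * AΨᵀ + Fᵀ * BΨᵀ := by
    simpa only [transpose_mul, transpose_add] using congrArg transpose hA
  have hBt : Bᵀ * Pᵀ = Gᵀ * BΨᵀ := by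
    simpa only [transpose_mul] using congrArg transpose hB
  simp only [kypStorage, fromBlocks_transpose, fromBlocks_multiply, transpose_zero,
    Matrix.mul_zero, Matrix.zero_mul, add_zero, zero_add]
  rw [Matrix.mul_assoc _ _ A, Matrix.mul_assoc _ _ B, ← Matrix.mul_assoc Aᵀ,
    ← Matrix.mul_assoc Aᵀ, ← Matrix.mul_assoc Bᵀ, ← Matrix.mul_assoc Bᵀ, hA, hB, hAt, hBt]
  simp only [Matrix.mul_add, Matrix.add_mul, Matrix.mul_assoc]
  congr 1
  abel

theorem FactIds.KYP_sub_conj_eq [Fintype m] {A : Matrix n n ℝ} {B : Matrix n m ℝ}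
    {AΨ : Matrix k k ℝ} {BΨ : Matrix k l ℝ} {CΨ : Matrix q k ℝ} {DΨ : Matrix q l ℝ}
    {M : Matrix q q ℝ} {Z' : Matrix k k ℝ} {M' : Matrix l l ℝ} {C' : Matrix l k ℝ}
    {D' : Matrix l l ℝ} (hfact : FactIds AΨ BΨ CΨ DΨ M Z' M' C' D') (hM : M.IsSymm)
    {P : Matrix k n ℝ} {F : Matrix l n ℝ} {G : Matrix l m ℝ}
    (hA : P * A = AΨ * P + BΨ * F) (hB : P * B = BΨ * G) (X : Matrix n n ℝ) :
    KYP (X - Pᵀ * Z' * P) M' A B (C' * P + D' * F) (D' * G)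
      = KYP X M A B (CΨ * P + DΨ * F) (DΨ * G) := by
  have hsupply : (fromCols C' D')ᵀ * M' * fromCols C' D'
      = kypStorage Z' AΨ BΨ + (fromCols CΨ DΨ)ᵀ * M * fromCols CΨ DΨ := by
    rw [← hfact.KYP_eq hM, KYP_eq_kypStorage_add]
  calc KYP (X - Pᵀ * Z' * P) M' A B (C' * P + D' * F) (D' * G)
      = kypStorage (X - Pᵀ * Z' * P) A B
          + (fromBlocks P 0 F G)ᵀ * ((fromCols C' D')ᵀ * M' * fromCols C' D')
            * fromBlocks P 0 F G := by
        rw [KYP_eq_kypStorage_add, ← fromCols_mul_fromBlocks_zero]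
        congr 1
        simp only [transpose_mul, Matrix.mul_assoc]
    _ = kypStorage X A B
          + (fromBlocks P 0 F G)ᵀ * ((fromCols CΨ DΨ)ᵀ * M * fromCols CΨ DΨ)
            * fromBlocks P 0 F G := by
        rw [hsupply, Matrix.mul_add, Matrix.add_mul, kypStorage_conj_fromBlocks hA hB,
          kypStorage_sub]
        abel
    _ = KYP X M A B (CΨ * P + DΨ * F) (DΨ * G) := by
        rw [KYP_eq_kypStorage_add, ← fromCols_mul_fromBlocks_zero]
        congr 1
        simp only [transpose_mul, Matrix.mul_assoc]

theorem shifted_kyp_certificate_general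
    {n nw nz k q : ℕ}
    (A : Matrix (Fin n) (Fin n) ℝ) (B : Matrix (Fin n) (Fin nw) ℝ)
    (C : Matrix (Fin nz) (Fin n) ℝ) (D : Matrix (Fin nz) (Fin nw) ℝ)
    (AΨ : Matrix (Fin k) (Fin k) ℝ) (BΨ : Matrix (Fin k) (Fin nz ⊕ Fin nw) ℝ)
    (CΨ : Matrix (Fin q) (Fin k) ℝ) (DΨ : Matrix (Fin q) (Fin nz ⊕ Fin nw) ℝ)
    (M : Matrix (Fin q) (Fin q) ℝ) (hM : M.IsSymm)
    (Z' : Matrix (Fin k) (Fin k) ℝ)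
    (M' : Matrix (Fin nz ⊕ Fin nw) (Fin nz ⊕ Fin nw) ℝ)
    (C' : Matrix (Fin nz ⊕ Fin nw) (Fin k) ℝ)
    (D' : Matrix (Fin nz ⊕ Fin nw) (Fin nz ⊕ Fin nw) ℝ)
    (hfact : FactIds AΨ BΨ CΨ DΨ M Z' M' C' D')
    (𝒳 : Matrix (Fin k ⊕ Fin n) (Fin k ⊕ Fin n) ℝ)
    (hKYP : (-(KYP 𝒳 M
        (fromBlocks AΨ (BΨ * CFmat C) 0 A)
        (fromRows (BΨ * DFmat D) B)
        (fromCols CΨ (DΨ * CFmat C))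
        (DΨ * DFmat D))).PosDef) :
    (-(KYP (𝒳 - fromBlocks Z' 0 0 0) M'
        (fromBlocks AΨ (BΨ * CFmat C) 0 A)
        (fromRows (BΨ * DFmat D) B)
        (fromCols C' (D' * CFmat C))
        (D' * DFmat D))).PosDef := by
  set P : Matrix (Fin k) (Fin k ⊕ Fin n) ℝ := fromCols 1 0
  set F : Matrix (Fin nz ⊕ Fin nw) (Fin k ⊕ Fin n) ℝ := fromCols 0 (CFmat C)
  have hA : P * fromBlocks AΨ (BΨ * CFmat C) 0 A = AΨ * P + BΨ * F := by
    simp only [P, F, fromCols_mul_fromBlocks, mul_fromCols, fromCols_add_fromCols,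
      Matrix.one_mul, Matrix.mul_one, Matrix.zero_mul, Matrix.mul_zero, add_zero, zero_add]
    -- the two sides differ only in the `HMul` instance (`Matrix`'s versus `CStarMatrix`'s)
    rfl
  have hB : P * fromRows (BΨ * DFmat D) B = BΨ * DFmat D := by
    simp only [P, fromCols_mul_fromRows, Matrix.one_mul, Matrix.zero_mul, add_zero]
  have hZ : fromBlocks Z' 0 0 0 = Pᵀ * Z' * P := by
    rw [transpose_fromCols, fromRows_mul, fromRows_mul_fromCols]
    simp only [transpose_one, transpose_zero, Matrix.one_mul, Matrix.zero_mul, Matrix.mul_one,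
      Matrix.mul_zero]
  have hC : ∀ {r : Type} (C₀ : Matrix r (Fin k) ℝ) (D₀ : Matrix r (Fin nz ⊕ Fin nw) ℝ),
      fromCols C₀ (D₀ * CFmat C) = C₀ * P + D₀ * F := by
    intro r C₀ D₀
    simp only [P, F, mul_fromCols, fromCols_add_fromCols, Matrix.mul_one, Matrix.mul_zero,
      add_zero, zero_add]
    rfl
  rw [hZ, hC, hfact.KYP_sub_conj_eq hM hA hB, ← hC]
  exact hKYP

/-- Shifted KYP certificate (first inequality of (kyph)). -/
theorem shifted_kyp_certificate
    {n nw nz k q : ℕ}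
    (A : Matrix (Fin n) (Fin n) ℝ) (B : Matrix (Fin n) (Fin nw) ℝ)
    (C : Matrix (Fin nz) (Fin n) ℝ) (D : Matrix (Fin nz) (Fin nw) ℝ)
    (AΨ : Matrix (Fin k) (Fin k) ℝ) (BΨ : Matrix (Fin k) (Fin nz ⊕ Fin nw) ℝ)
    (CΨ : Matrix (Fin q) (Fin k) ℝ) (DΨ : Matrix (Fin q) (Fin nz ⊕ Fin nw) ℝ)
    (M : Matrix (Fin q) (Fin q) ℝ) (hM : M.IsSymm)
    (Z' : Matrix (Fin k) (Fin k) ℝ)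
    (M' : Matrix (Fin nz ⊕ Fin nw) (Fin nz ⊕ Fin nw) ℝ)
    (C' : Matrix (Fin nz ⊕ Fin nw) (Fin k) ℝ)
    (D' : Matrix (Fin nz ⊕ Fin nw) (Fin nz ⊕ Fin nw) ℝ)
    (hfact : FactIds AΨ BΨ CΨ DΨ M Z' M' C' D')
    (𝒳 : Matrix (Fin k ⊕ Fin n) (Fin k ⊕ Fin n) ℝ) (h𝒳 : 𝒳.IsSymm)
    (hKYP : (-(KYP 𝒳 M
        (fromBlocks AΨ (BΨ * CFmat C) 0 A)
        (fromRows (BΨ * DFmat D) B)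
        (fromCols CΨ (DΨ * CFmat C))
        (DΨ * DFmat D))).PosDef) :
    (-(KYP (𝒳 - fromBlocks Z' 0 0 0) M'
        (fromBlocks AΨ (BΨ * CFmat C) 0 A)
        (fromRows (BΨ * DFmat D) B)
        (fromCols C' (D' * CFmat C))
        (D' * DFmat D))).PosDef :=
  shifted_kyp_certificate_general A B C D AΨ BΨ CΨ DΨ M hM Z' M' C' D' hfact 𝒳 hKYP

end IQCPaper
end
end

section
/- (Pointwise equivalence of the combined FDI with a positive-real-type FDI, step (fdic) ⟺ (fdit) in the proof of Lemma 3). Let nz, nw ∈ ℕ, let G ∈ ℂ^{nz×nw}, set E := [I_{nz}; 0_{nw×nz}] ∈ ℂ^{(nz+nw)×nz} and F := [G; I_{nw}] ∈ ℂ^{(nz+nw)×nw}, so that [E, F] = [[I_{nz}, G],[0, I_{nw}]] is invertible. Let P ∈ ℂ^{(nz+nw)×(nz+nw)} be invertible, let M̃ be a Hermitian complex (nz+nw)×(nz+nw) matrix, and define H := P [−E, F] [E, F]⁻¹ P⁻¹. Then the following are equivalent: (a) (P E)* M̃ (P E) is positive definite and (P F)* M̃ (P F) is negative definite; (b) H*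 M̃ + M̃ H is negative definite. Here * denotes conjugate transpose, and a Hermitian matrix S is positive (negative) definite if x* S x > 0 (< 0) for all nonzero complex vectors x. -/
/-!
Put `N := P [E, F] = [P E, P F]`, which is invertible. Then `H N = P [-E, F] = N J` with
`J = diag(-I, I)`, so `H` is similar to `J`, and the congruence by `N` turns `H* M̃ + M̃ H` into
`J K + K J` with `K := N* M̃ N`. The off-diagonal blocks of `K` cancel in `J K + K J`, which leaves
`diag(-2 (P E)* M̃ (P E), 2 (P F)* M̃ (P F))`; definiteness is preserved by congruence and splits
over the diagonal blocks.
-/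

open MeasureTheory Matrix
open scoped ComplexOrder

noncomputable section

namespace IQCPaper

/-- `E = [I; 0]` over ℂ. -/
def Emat (nz nw : ℕ) : Matrix (Fin nz ⊕ Fin nw) (Fin nz) ℂ :=
  fromRows 1 0

/-- `F = [G; I]` over ℂ. -/
def Fmat {nz nw : ℕ} (G : Matrix (Fin nz) (Fin nw) ℂ) :
    Matrix (Fin nz ⊕ Fin nw) (Fin nw) ℂ :=
  fromRows G 1

/-- `H = P [−E, F] [E, F]⁻¹ P⁻¹`. -/
def Hmat {nz nw : ℕ} (G : Matrix (Fin nz) (Fin nw) ℂ)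
    (P : Matrix (Fin nz ⊕ Fin nw) (Fin nz ⊕ Fin nw) ℂ) :
    Matrix (Fin nz ⊕ Fin nw) (Fin nz ⊕ Fin nw) ℂ :=
  P * fromCols (-(Emat nz nw)) (Fmat G) * (fromCols (Emat nz nw) (Fmat G))⁻¹ * P⁻¹

end IQCPaper

namespace Matrix

variable {R : Type*} {n m p q : Type*} [Fintype n]

theorem conjTranspose_fromCols_mul_lyapunov_mul_fromCols [Ring R] [StarRing R]
    {H M : Matrix n n R} {U : Matrix n p R} {V : Matrix n q R}
    (hH : H * fromCols U V = fromCols (-U) V) :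
    (fromCols U V)ᴴ * (Hᴴ * M + M * H) * fromCols U V =
      fromBlocks (-(2 • (Uᴴ * M * U))) 0 0 (2 • (Vᴴ * M * V)) := by
  have expand : (fromCols U V)ᴴ * (Hᴴ * M + M * H) * fromCols U V =
      (H * fromCols U V)ᴴ * M * fromCols U V + (fromCols U V)ᴴ * M * (H * fromCols U V) := by
    simp only [conjTranspose_mul, Matrix.mul_add, Matrix.add_mul, Matrix.mul_assoc]
  rw [expand, hH]
  simp only [conjTranspose_fromCols_eq_fromRows_conjTranspose, conjTranspose_neg, fromRows_mul,
    mul_fromCols, fromRows_neg, fromCols_fromRows_eq_fromBlocks, fromBlocks_add, Matrix.neg_mul,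
    Matrix.mul_neg, two_smul]
  congr 1 <;> abel

theorem posDef_fromBlocks_zero_iff [Fintype m] [Ring R] [PartialOrder R] [StarRing R] [IsOrderedAddMonoid R]
    {A : Matrix n n R} {D : Matrix m m R} :
    (fromBlocks A 0 0 D).PosDef ↔ A.PosDef ∧ D.PosDef := by
  refine ⟨fun h => ⟨h.submatrix Sum.inl_injective, h.submatrix Sum.inr_injective⟩,
    fun ⟨hA, hD⟩ => .of_dotProduct_mulVec_pos ?_ fun x hx => ?_⟩
  · simp [IsHermitian, fromBlocks_conjTranspose, hA.1.eq, hD.1.eq]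
  rw [← Sum.elim_comp_inl_inr x, fromBlocks_mulVec, Function.star_sumElim,
    sumElim_dotProduct_sumElim]
  simp only [zero_mulVec, add_zero, zero_add]
  by_cases hl : x ∘ Sum.inl = 0
  · have hr : x ∘ Sum.inr ≠ 0 := fun hr =>
      hx (by simpa [hl, hr] using (Sum.elim_comp_inl_inr x).symm)
    exact add_pos_of_nonneg_of_pos (hA.posSemidef.dotProduct_mulVec_nonneg _)
      (hD.dotProduct_mulVec_pos hr)
  · exact add_pos_of_pos_of_nonneg (hA.dotProduct_mulVec_pos hl)
      (hD.posSemidef.dotProduct_mulVec_nonneg _)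

omit [Fintype n] in
theorem posDef_nsmul_iff {𝕜 : Type*} [RCLike 𝕜] {A : Matrix n n 𝕜} {k : ℕ} (hk : k ≠ 0) :
    (k • A).PosDef ↔ A.PosDef := by
  have hk' : (0 : ℝ) < k := by positivity
  rw [← Nat.cast_smul_eq_nsmul ℝ]
  exact ⟨fun h => by simpa [smul_smul, hk'.ne'] using h.smul (inv_pos.2 hk'), fun h => h.smul hk'⟩

end Matrix

namespace IQCPaper

theorem fromCols_Emat_Fmat {nz nw : ℕ} (G : Matrix (Fin nz) (Fin nw) ℂ) :
    fromCols (Emat nz nw) (Fmat G) = fromBlocks 1 G 0 1 := by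
  simp [Emat, Fmat, fromCols_fromRows_eq_fromBlocks]

theorem isUnit_fromCols_Emat_Fmat {nz nw : ℕ} (G : Matrix (Fin nz) (Fin nw) ℂ) :
    IsUnit (fromCols (Emat nz nw) (Fmat G)) := by
  simp [isUnit_iff_isUnit_det, fromCols_Emat_Fmat]

theorem Hmat_mul_fromCols {nz nw : ℕ} (G : Matrix (Fin nz) (Fin nw) ℂ)
    {P : Matrix (Fin nz ⊕ Fin nw) (Fin nz ⊕ Fin nw) ℂ} (hP : IsUnit P) :
    Hmat G P * fromCols (P * Emat nz nw) (P * Fmat G) =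
      fromCols (-(P * Emat nz nw)) (P * Fmat G) := by
  have hT := (isUnit_iff_isUnit_det _).mp (isUnit_fromCols_Emat_Fmat G)
  have hP' := (isUnit_iff_isUnit_det P).mp hP
  rw [← mul_fromCols, Hmat, Matrix.mul_assoc _ P⁻¹, nonsing_inv_mul_cancel_left P _ hP',
    nonsing_inv_mul_cancel_right _ _ hT, mul_fromCols, Matrix.mul_neg]

theorem fdi_combined_iff_positive_real_general
    {nz nw : ℕ}
    (G : Matrix (Fin nz) (Fin nw) ℂ)
    (P : Matrix (Fin nz ⊕ Fin nw) (Fin nz ⊕ Fin nw) ℂ) (hP : IsUnit P)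
    (M' : Matrix (Fin nz ⊕ Fin nw) (Fin nz ⊕ Fin nw) ℂ) :
    (((P * Emat nz nw)ᴴ * M' * (P * Emat nz nw)).PosDef ∧
        (-((P * Fmat G)ᴴ * M' * (P * Fmat G))).PosDef) ↔
      (-((Hmat G P)ᴴ * M' + M' * Hmat G P)).PosDef := by
  have hN : IsUnit (fromCols (P * Emat nz nw) (P * Fmat G)) := by
    simpa only [mul_fromCols] using hP.mul (isUnit_fromCols_Emat_Fmat G)
  rw [← hN.posDef_star_left_conjugate_iff, star_eq_conjTranspose, Matrix.mul_neg, Matrix.neg_mul,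
    conjTranspose_fromCols_mul_lyapunov_mul_fromCols (Hmat_mul_fromCols G hP)]
  simp only [fromBlocks_neg, neg_neg, neg_zero, ← smul_neg, posDef_fromBlocks_zero_iff,
    posDef_nsmul_iff two_ne_zero]

/-- Pointwise equivalence of the combined FDI with a positive-real-type FDI
(step (fdic) ⟺ (fdit) in the proof of Lemma 3). -/
theorem fdi_combined_iff_positive_real
    {nz nw : ℕ}
    (G : Matrix (Fin nz) (Fin nw) ℂ)
    (P : Matrix (Fin nz ⊕ Fin nw) (Fin nz ⊕ Fin nw) ℂ) (hP : IsUnit P)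
    (M' : Matrix (Fin nz ⊕ Fin nw) (Fin nz ⊕ Fin nw) ℂ) (hM' : M'.IsHermitian) :
    (((P * Emat nz nw)ᴴ * M' * (P * Emat nz nw)).PosDef ∧
        (-((P * Fmat G)ᴴ * M' * (P * Fmat G))).PosDef) ↔
      (-((Hmat G P)ᴴ * M' + M' * Hmat G P)).PosDef :=
  fdi_combined_iff_positive_real_general G P hP M'

end IQCPaper
end
end

section
/- (Pointwise multiplier identity (fdiu)). Let α < 0 < β be reals, δ ∈ ℝ, ψ₁ ∈ ℂ^{m₁×nz}, ψ₂ ∈ ℂ^{m₂×nz}, P ∈ ℝ^{m₁×m₂}, and set M := [[0, P],[Pᵀ, 0]], Ψ := diag(ψ₁, ψ₂), T := [[I_{nz}, −β⁻¹ I_{nz}],[−α I_{nz}, I_{nz}]], J := [I_{nz}; I_{nz}]. Then [I_{nz}; δ I_{nz}]* (Ψ T)* M (Ψ T) [I_{nz}; δ I_{nz}] = (1 − β⁻¹ δ)(δ − α) · (Ψ J)* M (Ψ J), where * denotes conjugate transpose. In particular, if (Ψ J)* M (Ψ J) is positive semidefinite and δ ∈ [α, β], then [I_{nz}; δ I_{nz}]*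 (Ψ T)* M (Ψ T) [I_{nz}; δ I_{nz}] is positive semidefinite. -/
open MeasureTheory Matrix

noncomputable section

namespace IQCPaper

open scoped ComplexOrder

/-- The multiplier middle matrix `M = [[0, P], [Pᵀ, 0]]`, over ℂ. -/
def Mmid {m₁ m₂ : ℕ} (P : Matrix (Fin m₁) (Fin m₂) ℝ) :
    Matrix (Fin m₁ ⊕ Fin m₂) (Fin m₁ ⊕ Fin m₂) ℂ :=
  fromBlocks 0 (P.map Complex.ofReal) ((Pᵀ).map Complex.ofReal) 0

/-- `Ψ = diag(ψ₁, ψ₂)`. -/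
def PsiDiag {nz m₁ m₂ : ℕ} (ψ₁ : Matrix (Fin m₁) (Fin nz) ℂ)
    (ψ₂ : Matrix (Fin m₂) (Fin nz) ℂ) :
    Matrix (Fin m₁ ⊕ Fin m₂) (Fin nz ⊕ Fin nz) ℂ :=
  fromBlocks ψ₁ 0 0 ψ₂

/-- `T = [[I, −β⁻¹ I], [−α I, I]]`, over ℂ. -/
def Tmat (nz : ℕ) (α β : ℝ) : Matrix (Fin nz ⊕ Fin nz) (Fin nz ⊕ Fin nz) ℂ :=
  fromBlocks 1 (-((β : ℂ)⁻¹) • 1) (-(α : ℂ) • 1) 1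

/-- `J = [I; I]`, over ℂ. -/
def Jmat (nz : ℕ) : Matrix (Fin nz ⊕ Fin nz) (Fin nz) ℂ :=
  fromRows 1 1

/-- `[I; δ I]`, over ℂ. -/
def Jdelta (nz : ℕ) (δ : ℝ) : Matrix (Fin nz ⊕ Fin nz) (Fin nz) ℂ :=
  fromRows 1 ((δ : ℂ) • 1)

/-! Since `Ψ` is block diagonal, `Ψ T [I; δ I] = [(1 - β⁻¹ δ) ψ₁; (δ - α) ψ₂]` and `Ψ J = [ψ₁; ψ₂]`.
Because `M` only couples the two blocks, scaling them by real numbers `a` and `b` scales the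
quadratic form by `a b`. For `α ≤ δ ≤ β` both factors are nonnegative. -/

section Multiplier

variable {nz m₁ m₂ : ℕ}

lemma Mmid_mul_fromRows (P : Matrix (Fin m₁) (Fin m₂) ℝ)
    (A : Matrix (Fin m₁) (Fin nz) ℂ) (B : Matrix (Fin m₂) (Fin nz) ℂ) :
    Mmid P * fromRows A B
      = fromRows (P.map Complex.ofReal * B) ((Pᵀ).map Complex.ofReal * A) := by
  simp [Mmid, fromBlocks_mul_fromRows]

lemma fromRows_smul_conjTranspose_mul_Mmid_mul (P : Matrix (Fin m₁) (Fin m₂) ℝ)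
    (A : Matrix (Fin m₁) (Fin nz) ℂ) (B : Matrix (Fin m₂) (Fin nz) ℂ) (a b : ℝ) :
    (fromRows ((a : ℂ) • A) ((b : ℂ) • B))ᴴ * Mmid P * fromRows ((a : ℂ) • A) ((b : ℂ) • B)
      = ((a * b : ℝ) : ℂ) • ((fromRows A B)ᴴ * Mmid P * fromRows A B) := by
  simp only [Matrix.mul_assoc, Mmid_mul_fromRows, conjTranspose_fromRows_eq_fromCols_conjTranspose,
    fromCols_mul_fromRows, conjTranspose_smul, Complex.star_def, Complex.conj_ofReal,
    Matrix.smul_mul, Matrix.mul_smul, smul_smul, smul_add, Complex.ofReal_mul]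
  rw [mul_comm (b : ℂ)]

lemma PsiDiag_mul_Tmat_mul_Jdelta (α β δ : ℝ)
    (ψ₁ : Matrix (Fin m₁) (Fin nz) ℂ) (ψ₂ : Matrix (Fin m₂) (Fin nz) ℂ) :
    PsiDiag ψ₁ ψ₂ * Tmat nz α β * Jdelta nz δ
      = fromRows (((1 - β⁻¹ * δ : ℝ) : ℂ) • ψ₁) (((δ - α : ℝ) : ℂ) • ψ₂) := by
  rw [PsiDiag, Tmat, Jdelta, Matrix.mul_assoc, fromBlocks_mul_fromRows, fromBlocks_mul_fromRows]
  simp only [Matrix.mul_add, Matrix.mul_smul, Matrix.mul_one, zero_add, smul_smul]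
  push_cast
  congr 1 <;> module

lemma PsiDiag_mul_Jmat (ψ₁ : Matrix (Fin m₁) (Fin nz) ℂ) (ψ₂ : Matrix (Fin m₂) (Fin nz) ℂ) :
    PsiDiag ψ₁ ψ₂ * Jmat nz = fromRows ψ₁ ψ₂ := by
  simp [PsiDiag, Jmat, fromBlocks_mul_fromRows]

end Multiplier

theorem multiplier_identity_fdiu_general
    {nz m₁ m₂ : ℕ} (α β δ : ℝ) (hβ : 0 < β)
    (ψ₁ : Matrix (Fin m₁) (Fin nz) ℂ) (ψ₂ : Matrix (Fin m₂) (Fin nz) ℂ)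
    (P : Matrix (Fin m₁) (Fin m₂) ℝ) :
    ((Jdelta nz δ)ᴴ * (PsiDiag ψ₁ ψ₂ * Tmat nz α β)ᴴ * Mmid P *
          (PsiDiag ψ₁ ψ₂ * Tmat nz α β) * Jdelta nz δ
        = (((1 - β⁻¹ * δ) * (δ - α) : ℝ) : ℂ) •
            ((PsiDiag ψ₁ ψ₂ * Jmat nz)ᴴ * Mmid P * (PsiDiag ψ₁ ψ₂ * Jmat nz)))
      ∧ (((PsiDiag ψ₁ ψ₂ * Jmat nz)ᴴ * Mmid P * (PsiDiag ψ₁ ψ₂ * Jmat nz)).PosSemidef →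
          α ≤ δ → δ ≤ β →
          ((Jdelta nz δ)ᴴ * (PsiDiag ψ₁ ψ₂ * Tmat nz α β)ᴴ * Mmid P *
            (PsiDiag ψ₁ ψ₂ * Tmat nz α β) * Jdelta nz δ).PosSemidef) := by
  have identity : (Jdelta nz δ)ᴴ * (PsiDiag ψ₁ ψ₂ * Tmat nz α β)ᴴ * Mmid P *
        (PsiDiag ψ₁ ψ₂ * Tmat nz α β) * Jdelta nz δ
      = (((1 - β⁻¹ * δ) * (δ - α) : ℝ) : ℂ) •
          ((PsiDiag ψ₁ ψ₂ * Jmat nz)ᴴ * Mmid P * (PsiDiag ψ₁ ψ₂ * Jmat nz)) := by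
    rw [Matrix.mul_assoc _ (PsiDiag ψ₁ ψ₂ * Tmat nz α β), ← conjTranspose_mul,
      PsiDiag_mul_Tmat_mul_Jdelta, PsiDiag_mul_Jmat, fromRows_smul_conjTranspose_mul_Mmid_mul]
  refine ⟨identity, fun hpsd hαδ hδβ => ?_⟩
  have hδ : β⁻¹ * δ ≤ 1 := inv_mul_le_one_of_le₀ hδβ hβ.le
  rw [identity]
  exact hpsd.smul (Complex.zero_le_real.mpr (mul_nonneg (by linarith) (by linarith)))

/-- Pointwise multiplier identity (fdiu). -/
theorem multiplier_identity_fdiu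
    {nz m₁ m₂ : ℕ} (α β δ : ℝ) (hα : α < 0) (hβ : 0 < β)
    (ψ₁ : Matrix (Fin m₁) (Fin nz) ℂ) (ψ₂ : Matrix (Fin m₂) (Fin nz) ℂ)
    (P : Matrix (Fin m₁) (Fin m₂) ℝ) :
    ((Jdelta nz δ)ᴴ * (PsiDiag ψ₁ ψ₂ * Tmat nz α β)ᴴ * Mmid P *
          (PsiDiag ψ₁ ψ₂ * Tmat nz α β) * Jdelta nz δ
        = (((1 - β⁻¹ * δ) * (δ - α) : ℝ) : ℂ) •
            ((PsiDiag ψ₁ ψ₂ * Jmat nz)ᴴ * Mmid P * (PsiDiag ψ₁ ψ₂ * Jmat nz)))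
      ∧ (((PsiDiag ψ₁ ψ₂ * Jmat nz)ᴴ * Mmid P * (PsiDiag ψ₁ ψ₂ * Jmat nz)).PosSemidef →
          α ≤ δ → δ ≤ β →
          ((Jdelta nz δ)ᴴ * (PsiDiag ψ₁ ψ₂ * Tmat nz α β)ᴴ * Mmid P *
            (PsiDiag ψ₁ ψ₂ * Tmat nz α β) * Jdelta nz δ).PosSemidef) :=
  multiplier_identity_fdiu_general α β δ hβ ψ₁ ψ₂ P

end IQCPaper
end
end

section
/- (Lemma 8, verification part: a solution of the nonsymmetric Riccati equation certifies a canonical factorization with the structured terminal cost (cer)). For j = 1, 2, let A_j ∈ ℝ^{k_j×k_j}, B_j ∈ ℝ^{k_j×nz}, C_j ∈ ℝ^{m_j×k_j}, D_j ∈ ℝ^{m_j×nz}, let P ∈ ℝ^{m₁×m₂}, and suppose Λ := D₁ᵀ P D₂ is invertible. Suppose K ∈ ℝ^{k₁×k₂} satisfies A₁ᵀ K + K A₂ + C₁ᵀ P C₂ − (K B₂ + C₁ᵀ P D₂) Λ⁻¹ (B₁ᵀ K + D₁ᵀ P C₂) = 0, and that both A₂ − B₂ Λ⁻¹ (B₁ᵀ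 K + D₁ᵀ P C₂) and A₁ᵀ − (K B₂ + C₁ᵀ P D₂) Λ⁻¹ B₁ᵀ are Hurwitz. Set A_Ψ := diag(A₁, A₂), B_Ψ := diag(B₁, B₂), C_Ψ := diag(C₁, C₂), D_Ψ := diag(D₁, D₂), M := [[0, P],[Pᵀ, 0]], and define C̃₁ := Λ⁻ᵀ (B₂ᵀ Kᵀ + D₂ᵀ Pᵀ C₁), C̃₂ := Λ⁻¹ (B₁ᵀ K + D₁ᵀ P C₂), Z̃ := [[0, K],[Kᵀ, 0]], M̃ := [[0, Λ],[Λᵀ, 0]], C̃ := diag(C̃₁, C̃₂), D̃ := I_{2·nz}. Then (Z̃, M̃, C̃, D̃) certifies a canonical factorization of (A_Ψ, B_Ψ, C_Ψ, D_Ψ, M), i.e., A_Ψᵀ Z̃ + Z̃ A_Ψ + C_Ψᵀ M C_Ψ = C̃ᵀ M̃ C̃, Z̃ B_Ψ + C_Ψᵀ M D_Ψ = C̃ᵀ M̃ D̃, D_Ψᵀ M D_Ψ = D̃ᵀ M̃ D̃, and A_Ψ − B_Ψ D̃⁻¹ C̃ is Hurwitz. -/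
open MeasureTheory Matrix

noncomputable section

namespace IQCPaper

/-- Spectrum of a block-upper-triangular (here block-diagonal) complex matrix is contained in
the union of the spectra of the diagonal blocks. -/
lemma spec_fromBlocks_aux {n m : Type*} [Fintype n] [Fintype m] [DecidableEq n] [DecidableEq m]
    (A : Matrix n n ℂ) (D : Matrix m m ℂ) (μ : ℂ)
    (h : μ ∈ spectrum ℂ (fromBlocks A 0 0 D)) :
    μ ∈ spectrum ℂ A ∨ μ ∈ spectrum ℂ D := by
  rw [spectrum.mem_iff] at h
  by_contra hc
  push_neg at hc
  obtain ⟨h1, h2⟩ := hc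
  rw [spectrum.mem_iff, not_not] at h1 h2
  apply h
  have : algebraMap ℂ (Matrix (n ⊕ m) (n ⊕ m) ℂ) μ - fromBlocks A 0 0 D
      = fromBlocks (algebraMap ℂ _ μ - A) 0 0 (algebraMap ℂ _ μ - D) := by
    rw [Algebra.algebraMap_eq_smul_one, Algebra.algebraMap_eq_smul_one,
      Algebra.algebraMap_eq_smul_one, ← fromBlocks_one, fromBlocks_smul]
    ext (i|i) (j|j) <;> simp [fromBlocks]
  rw [this, isUnit_iff_isUnit_det, det_fromBlocks_zero₁₂]
  exact ((isUnit_iff_isUnit_det _).mp h1).mul ((isUnit_iff_isUnit_det _).mp h2)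

lemma fromBlocks_sub_aux {l m n o α : Type*} [Sub α]
    (A : Matrix n l α) (B : Matrix n m α) (C : Matrix o l α) (D : Matrix o m α)
    (A' : Matrix n l α) (B' : Matrix n m α) (C' : Matrix o l α) (D' : Matrix o m α) :
    fromBlocks A B C D - fromBlocks A' B' C' D'
      = fromBlocks (A - A') (B - B') (C - C') (D - D') := by
  ext (i|i) (j|j) <;> simp [fromBlocks]

lemma spec_transpose_aux {n : Type*} [Fintype n] [DecidableEq n]
    (A : Matrix n n ℂ) (μ : ℂ) (h : μ ∈ spectrum ℂ Aᵀ) : μ ∈ spectrum ℂ A := by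
  rw [spectrum.mem_iff] at h ⊢
  intro hu
  apply h
  have : algebraMap ℂ (Matrix n n ℂ) μ - Aᵀ = (algebraMap ℂ (Matrix n n ℂ) μ - A)ᵀ := by
    rw [transpose_sub, Matrix.algebraMap_eq_diagonal, diagonal_transpose]
  rw [this, isUnit_iff_isUnit_det, det_transpose]
  exact (isUnit_iff_isUnit_det _).mp hu

lemma hurwitz_transpose_aux {n : Type*} [Fintype n] [DecidableEq n]
    (A : Matrix n n ℝ) (h : IsHurwitz Aᵀ) : IsHurwitz A := by
  intro μ hμ
  apply h
  have heq : (Aᵀ).map Complex.ofReal = (A.map Complex.ofReal)ᵀ := rfl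
  rw [heq]
  have := spec_transpose_aux (A.map Complex.ofReal)ᵀ μ
  rw [transpose_transpose] at this
  exact this hμ

/-- Lemma 8 (verification part): a solution of the nonsymmetric Riccati equation
certifies a canonical factorization with the structured terminal cost (cer). -/
theorem nonsymmetric_riccati_certifies
    {nz k₁ k₂ m₁ m₂ : ℕ}
    (A₁ : Matrix (Fin k₁) (Fin k₁) ℝ) (A₂ : Matrix (Fin k₂) (Fin k₂) ℝ)
    (B₁ : Matrix (Fin k₁) (Fin nz) ℝ) (B₂ : Matrix (Fin k₂) (Fin nz) ℝ)
    (C₁ : Matrix (Fin m₁) (Fin k₁) ℝ) (C₂ : Matrix (Fin m₂) (Fin k₂) ℝ)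
    (D₁ : Matrix (Fin m₁) (Fin nz) ℝ) (D₂ : Matrix (Fin m₂) (Fin nz) ℝ)
    (P : Matrix (Fin m₁) (Fin m₂) ℝ)
    (hΛ : IsUnit (D₁ᵀ * P * D₂))
    (K : Matrix (Fin k₁) (Fin k₂) ℝ)
    (hare : A₁ᵀ * K + K * A₂ + C₁ᵀ * P * C₂
        - (K * B₂ + C₁ᵀ * P * D₂) * (D₁ᵀ * P * D₂)⁻¹ * (B₁ᵀ * K + D₁ᵀ * P * C₂) = 0)
    (hH₂ : IsHurwitz (A₂ - B₂ * ((D₁ᵀ * P * D₂)⁻¹ * (B₁ᵀ * K + D₁ᵀ * P * C₂))))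
    (hH₁ : IsHurwitz (A₁ᵀ - (K * B₂ + C₁ᵀ * P * D₂) * (D₁ᵀ * P * D₂)⁻¹ * B₁ᵀ)) :
    CertifiesCanonical
      (fromBlocks A₁ 0 0 A₂) (fromBlocks B₁ 0 0 B₂)
      (fromBlocks C₁ 0 0 C₂) (fromBlocks D₁ 0 0 D₂)
      (fromBlocks 0 P Pᵀ 0)
      (fromBlocks 0 K Kᵀ 0)
      (fromBlocks 0 (D₁ᵀ * P * D₂) (D₁ᵀ * P * D₂)ᵀ 0)
      (fromBlocks (((D₁ᵀ * P * D₂)ᵀ)⁻¹ * (B₂ᵀ * Kᵀ + D₂ᵀ * Pᵀ * C₁)) 0 0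
        ((D₁ᵀ * P * D₂)⁻¹ * (B₁ᵀ * K + D₁ᵀ * P * C₂)))
      1 := by
  have hdet : IsUnit (D₁ᵀ * P * D₂).det := (isUnit_iff_isUnit_det _).mp hΛ
  have hinv : (D₁ᵀ*P*D₂) * (D₁ᵀ*P*D₂)⁻¹ = 1 := mul_nonsing_inv _ hdet
  have hinv' : (D₁ᵀ*P*D₂)⁻¹ * (D₁ᵀ*P*D₂) = 1 := nonsing_inv_mul _ hdet
  have key : A₁ᵀ*K + K*A₂ + C₁ᵀ*P*C₂
      = (K*B₂+C₁ᵀ*P*D₂) * ((D₁ᵀ*P*D₂)⁻¹ * (B₁ᵀ*K+D₁ᵀ*P*C₂)) := by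
    rw [← Matrix.mul_assoc]; exact sub_eq_zero.mp hare
  have hC1T : (((D₁ᵀ*P*D₂)ᵀ)⁻¹ * (B₂ᵀ*Kᵀ + D₂ᵀ*Pᵀ*C₁))ᵀ
      = (K*B₂+C₁ᵀ*P*D₂) * (D₁ᵀ*P*D₂)⁻¹ := by
    have h1 : ((D₁ᵀ*P*D₂)ᵀ)⁻¹ = ((D₁ᵀ*P*D₂)⁻¹)ᵀ := (transpose_nonsing_inv _).symm
    rw [h1, transpose_mul, transpose_transpose]
    congr 1
    simp [transpose_add, transpose_mul, Matrix.mul_assoc]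
  have blk12 : (((D₁ᵀ*P*D₂)ᵀ)⁻¹ * (B₂ᵀ*Kᵀ + D₂ᵀ*Pᵀ*C₁))ᵀ * (D₁ᵀ*P*D₂) *
      ((D₁ᵀ*P*D₂)⁻¹ * (B₁ᵀ*K+D₁ᵀ*P*C₂)) = A₁ᵀ*K + K*A₂ + C₁ᵀ*P*C₂ := by
    rw [hC1T, Matrix.mul_assoc _ _ (D₁ᵀ*P*D₂), hinv', Matrix.mul_one, key]
  have hE : (((D₁ᵀ*P*D₂)ᵀ)⁻¹ * (B₂ᵀ*Kᵀ + D₂ᵀ*Pᵀ*C₁))ᵀ * (D₁ᵀ*P*D₂)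
      = K*B₂ + C₁ᵀ*P*D₂ := by
    rw [hC1T, Matrix.mul_assoc, hinv', Matrix.mul_one]
  have hF : ((D₁ᵀ*P*D₂)⁻¹ * (B₁ᵀ*K+D₁ᵀ*P*C₂))ᵀ * (D₁ᵀ*P*D₂)ᵀ
      = (B₁ᵀ*K+D₁ᵀ*P*C₂)ᵀ := by
    rw [← transpose_mul, ← Matrix.mul_assoc, hinv, Matrix.one_mul]
  refine ⟨⟨?_, ?_, ?_, ?_, ?_⟩, isUnit_one, ?_⟩
  · simp [Matrix.IsSymm, fromBlocks_transpose]
  · simp [Matrix.IsSymm, fromBlocks_transpose]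
  · simp only [fromBlocks_transpose, fromBlocks_multiply, fromBlocks_add, transpose_zero,
      Matrix.mul_zero, Matrix.zero_mul, add_zero, zero_add]
    have h2 : ((D₁ᵀ*P*D₂)ᵀ)⁻¹ * (B₂ᵀ*Kᵀ + D₂ᵀ*Pᵀ*C₁)
        = ((K*B₂+C₁ᵀ*P*D₂) * (D₁ᵀ*P*D₂)⁻¹)ᵀ := by
      rw [← hC1T, transpose_transpose]
    have blk21 : ((D₁ᵀ*P*D₂)⁻¹ * (B₁ᵀ*K+D₁ᵀ*P*C₂))ᵀ * (D₁ᵀ*P*D₂)ᵀ *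
        (((D₁ᵀ*P*D₂)ᵀ)⁻¹ * (B₂ᵀ*Kᵀ + D₂ᵀ*Pᵀ*C₁))
        = A₂ᵀ*Kᵀ + Kᵀ*A₁ + C₂ᵀ*Pᵀ*C₁ := by
      rw [hF, h2, ← transpose_mul, Matrix.mul_assoc, ← key]
      simp only [transpose_add, transpose_mul, transpose_transpose]
      rw [← Matrix.mul_assoc]
      abel
    rw [blk12, blk21]
  · simp only [fromBlocks_transpose, fromBlocks_multiply, fromBlocks_add, transpose_zero,
      Matrix.mul_zero, Matrix.zero_mul, add_zero, zero_add, Matrix.mul_one]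
    have hF2 : ((D₁ᵀ*P*D₂)⁻¹ * (B₁ᵀ*K+D₁ᵀ*P*C₂))ᵀ * (D₁ᵀ*P*D₂)ᵀ
        = Kᵀ*B₁ + C₂ᵀ*Pᵀ*D₁ := by
      rw [hF]
      simp only [transpose_add, transpose_mul, transpose_transpose]
      rw [← Matrix.mul_assoc]
    rw [hE, hF2]
  · simp only [fromBlocks_transpose, fromBlocks_multiply, transpose_zero,
      Matrix.mul_zero, Matrix.zero_mul, add_zero, zero_add, transpose_one,
      Matrix.mul_one, Matrix.one_mul]
    have h3 : (D₁ᵀ*P*D₂)ᵀ = D₂ᵀ*Pᵀ*D₁ := by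
      simp only [transpose_mul, transpose_transpose]
      rw [← Matrix.mul_assoc]
    rw [h3]
  · have hrw : fromBlocks A₁ 0 0 A₂ -
        fromBlocks B₁ 0 0 B₂ * (1:Matrix (Fin nz ⊕ Fin nz) (Fin nz ⊕ Fin nz) ℝ)⁻¹ *
        fromBlocks (((D₁ᵀ * P * D₂)ᵀ)⁻¹ * (B₂ᵀ * Kᵀ + D₂ᵀ * Pᵀ * C₁)) 0 0
          ((D₁ᵀ * P * D₂)⁻¹ * (B₁ᵀ * K + D₁ᵀ * P * C₂))
        = fromBlocks (A₁ - B₁ * (((D₁ᵀ * P * D₂)ᵀ)⁻¹ * (B₂ᵀ * Kᵀ + D₂ᵀ * Pᵀ * C₁))) 0 0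
          (A₂ - B₂ * ((D₁ᵀ * P * D₂)⁻¹ * (B₁ᵀ * K + D₁ᵀ * P * C₂))) := by
      rw [inv_one, Matrix.mul_one, fromBlocks_multiply]
      simp only [Matrix.mul_zero, Matrix.zero_mul, add_zero, zero_add]
      rw [fromBlocks_sub_aux]
      simp only [sub_zero]
    rw [hrw]
    intro μ hμ
    have hmap : (fromBlocks (A₁ - B₁ * (((D₁ᵀ * P * D₂)ᵀ)⁻¹ * (B₂ᵀ * Kᵀ + D₂ᵀ * Pᵀ * C₁))) 0 0
          (A₂ - B₂ * ((D₁ᵀ * P * D₂)⁻¹ * (B₁ᵀ * K + D₁ᵀ * P * C₂)))).map Complex.ofReal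
        = fromBlocks
          ((A₁ - B₁ * (((D₁ᵀ * P * D₂)ᵀ)⁻¹ * (B₂ᵀ * Kᵀ + D₂ᵀ * Pᵀ * C₁))).map Complex.ofReal) 0 0
          ((A₂ - B₂ * ((D₁ᵀ * P * D₂)⁻¹ * (B₁ᵀ * K + D₁ᵀ * P * C₂))).map Complex.ofReal) := by
      rw [fromBlocks_map]
      simp only [Matrix.map_zero _ Complex.ofReal_zero]
    rw [hmap] at hμ
    rcases spec_fromBlocks_aux _ _ μ hμ with h | h
    · have hX1 : IsHurwitz (A₁ - B₁ * (((D₁ᵀ * P * D₂)ᵀ)⁻¹ * (B₂ᵀ * Kᵀ + D₂ᵀ * Pᵀ * C₁))) := by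
        apply hurwitz_transpose_aux
        have heq : (A₁ - B₁ * (((D₁ᵀ * P * D₂)ᵀ)⁻¹ * (B₂ᵀ * Kᵀ + D₂ᵀ * Pᵀ * C₁)))ᵀ
            = A₁ᵀ - (K * B₂ + C₁ᵀ * P * D₂) * (D₁ᵀ * P * D₂)⁻¹ * B₁ᵀ := by
          rw [transpose_sub, transpose_mul, hC1T]
        rw [heq]
        exact hH₁
      exact hX1 μ h
    · exact hH₂ μ h


end IQCPaper
end
end

section
/- (Extension of a canonical factorization certificate along a stable loop transformation, identity (are3) in the proof of Lemma 6). Let (A_Ψ, B_Ψ, C_Ψ, D_Ψ) be filter matrices with m = nz + nw inputs, M = Mᵀ, and suppose (Z̃, M̃, C̃, D̃) certifies a canonical factorization of (A_Ψ, B_Ψ, C_Ψ, D_Ψ, M). Let A_H ∈ ℝ^{k_H×k_H} be Hurwitz, B_H ∈ ℝ^{k_H×nw}, C_H ∈ ℝ^{nz×k_H}, D_H ∈ ℝ^{nz×nw}, and set C_e := [C_H; 0_{nw×k_H}], D_e := [[I_{nz}, D_H],[0, I_{nw}]], B_e := [0_{k_H×nz}, B_H]. Define the extended realization A_ext := [[A_Ψ,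 B_Ψ C_e],[0, A_H]], B_ext := [B_Ψ D_e; B_e], C_ext := [C_Ψ, D_Ψ C_e], D_ext := D_Ψ D_e. Then the quadruple (diag(Z̃, 0_{k_H×k_H}), M̃, [C̃, D̃ C_e], D̃ D_e) certifies a canonical factorization of (A_ext, B_ext, C_ext, D_ext, M): the three factorization identities hold for the extended data, D̃ D_e is invertible, and A_ext − B_ext (D̃ D_e)⁻¹ [C̃, D̃ C_e] is Hurwitz. -/
/-! The extended filter is the cascade of the stable system `H` into `Ψ`, and `Z̃` is padded
by zero on the states of `H`. Every block of the three extended factorization identities is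
then an original identity, or its transpose (this is where `M = Mᵀ` enters), multiplied by
`C_e` or `D_e` on either side. In the extended closed-loop matrix `D_e` cancels against
`B_Ψ D_e` and `D̃` against `D̃ C_e`, which leaves a block lower triangular matrix with diagonal
blocks `A_Ψ - B_Ψ D̃⁻¹ C̃` and `A_H - B_e D_e⁻¹ C_e = A_H` (because `B_e D_e = B_e` and
`B_e C_e = 0`); its spectrum is the union of theirs. -/

open MeasureTheory Matrix

noncomputable section

namespace IQCPaper

/-- `C_e = [C_H; 0]`. -/
def Ce {nz nw kH : ℕ} (CH : Matrix (Fin nz) (Fin kH) ℝ) :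
    Matrix (Fin nz ⊕ Fin nw) (Fin kH) ℝ :=
  fromRows CH 0

/-- `D_e = [[I, D_H], [0, I]]`. -/
def De {nz nw : ℕ} (DH : Matrix (Fin nz) (Fin nw) ℝ) :
    Matrix (Fin nz ⊕ Fin nw) (Fin nz ⊕ Fin nw) ℝ :=
  fromBlocks 1 DH 0 1

/-- `B_e = [0, B_H]`. -/
def Be {nz nw kH : ℕ} (BH : Matrix (Fin kH) (Fin nw) ℝ) :
    Matrix (Fin kH) (Fin nz ⊕ Fin nw) ℝ :=
  fromCols 0 BH

theorem isHurwitz_fromBlocks_zero₁₂ {n m : Type*} [Fintype n] [Fintype m]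
    [DecidableEq n] [DecidableEq m] {A : Matrix n n ℝ} {C : Matrix m n ℝ} {D : Matrix m m ℝ}
    (hA : IsHurwitz A) (hD : IsHurwitz D) : IsHurwitz (fromBlocks A 0 C D) := by
  intro μ hμ
  rw [fromBlocks_map, Matrix.map_zero _ Complex.ofReal_zero,
    mem_spectrum_iff_isRoot_charpoly, charpoly_fromBlocks_zero₁₂, Polynomial.root_mul] at hμ
  rcases hμ with hμ | hμ
  · exact hA μ (mem_spectrum_iff_isRoot_charpoly.mpr hμ)
  · exact hD μ (mem_spectrum_iff_isRoot_charpoly.mpr hμ)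

theorem fromRows_add_fromRows {m₁ m₂ n R : Type*} [Add R] (A₁ : Matrix m₁ n R)
    (A₂ : Matrix m₂ n R) (B₁ : Matrix m₁ n R) (B₂ : Matrix m₂ n R) :
    fromRows A₁ A₂ + fromRows B₁ B₂ = fromRows (A₁ + B₁) (A₂ + B₂) := by
  ext (i | i) j <;> rfl

section Extension

variable {k m q kH : Type*}

theorem factIds_extension [Fintype k] [Fintype m] [Fintype q] [Fintype kH]
    {A : Matrix k k ℝ} {B : Matrix k m ℝ} {C : Matrix q k ℝ} {D : Matrix q m ℝ}
    {M : Matrix q q ℝ} {Z' : Matrix k k ℝ} {M' : Matrix m m ℝ} {C' : Matrix m k ℝ}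
    {D' : Matrix m m ℝ} (hM : M.IsSymm)
    (h : FactIds A B C D M Z' M' C' D') (AH : Matrix kH kH ℝ) (Be : Matrix kH m ℝ)
    (Ce : Matrix m kH ℝ) (De : Matrix m m ℝ) :
    FactIds (fromBlocks A (B * Ce) 0 AH) (fromRows (B * De) Be) (fromCols C (D * Ce))
      (D * De) M (fromBlocks Z' 0 0 0) M' (fromCols C' (D' * Ce)) (D' * De) := by
  obtain ⟨hZ', hM', hA, hB, hD⟩ := h
  have hBt : Bᵀ * Z' + Dᵀ * M * C = D'ᵀ * M' * C' := by
    simpa only [transpose_add, transpose_mul, transpose_transpose, hZ'.eq, hM.eq, hM'.eq,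
      Matrix.mul_assoc] using congrArg transpose hB
  refine ⟨?_, hM', ?_, ?_, ?_⟩
  · simp only [IsSymm, fromBlocks_transpose, hZ'.eq, transpose_zero]
  · simp only [fromBlocks_transpose, transpose_fromCols, fromBlocks_multiply,
      fromRows_mul, mul_fromCols, fromCols_fromRows_eq_fromBlocks, fromBlocks_add,
      transpose_zero, transpose_mul, Matrix.mul_zero, Matrix.zero_mul, add_zero, zero_add]
    rw [fromBlocks_inj]
    refine ⟨hA, ?_, ?_, ?_⟩
    · rw [← Matrix.mul_assoc, ← Matrix.mul_assoc, ← Matrix.add_mul, hB, Matrix.mul_assoc]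
    · simpa only [Matrix.mul_add, Matrix.mul_assoc] using congrArg (Ceᵀ * ·) hBt
    · simpa only [Matrix.mul_assoc] using congrArg (Ceᵀ * · * Ce) hD
  · simp only [transpose_fromCols, fromBlocks_mul_fromRows, fromRows_mul, fromRows_add_fromRows,
      Matrix.zero_mul, add_zero, zero_add, transpose_mul]
    rw [fromRows_ext_iff]
    constructor
    · simpa only [Matrix.add_mul, Matrix.mul_assoc] using congrArg (· * De) hB
    · simpa only [Matrix.mul_assoc] using congrArg (Ceᵀ * · * De) hD
  · simpa only [transpose_mul, Matrix.mul_assoc] using congrArg (Deᵀ * · * De) hD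

theorem fromBlocks_sub_fromRows_mul_inv_mul_fromCols [Fintype m] [DecidableEq m]
    {A : Matrix k k ℝ} {B : Matrix k m ℝ} {C' : Matrix m k ℝ} {D' : Matrix m m ℝ}
    (hD' : IsUnit D'.det) (AH : Matrix kH kH ℝ) (Be : Matrix kH m ℝ) (Ce : Matrix m kH ℝ)
    {De : Matrix m m ℝ} (hDe : IsUnit De.det) :
    fromBlocks A (B * Ce) 0 AH - fromRows (B * De) Be * (D' * De)⁻¹ * fromCols C' (D' * Ce) =
      fromBlocks (A - B * D'⁻¹ * C') 0 (-(Be * De⁻¹ * D'⁻¹ * C'))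
        (AH - Be * De⁻¹ * Ce) := by
  have hB : B * De * (De⁻¹ * D'⁻¹) = B * D'⁻¹ := by
    rw [← Matrix.mul_assoc, mul_nonsing_inv_cancel_right _ _ hDe]
  have hCe : D'⁻¹ * (D' * Ce) = Ce := nonsing_inv_mul_cancel_left _ _ hD'
  rw [Matrix.mul_inv_rev, fromRows_mul, fromRows_mul_fromCols, sub_eq_add_neg, fromBlocks_neg,
    fromBlocks_add, hB]
  simp only [Matrix.mul_assoc, hCe, sub_eq_add_neg, add_neg_cancel, zero_add]

theorem certifiesCanonical_extension [Fintype k] [Fintype m] [Fintype q] [Fintype kH]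
    [DecidableEq k] [DecidableEq m] [DecidableEq kH] {A : Matrix k k ℝ} {B : Matrix k m ℝ}
    {C : Matrix q k ℝ} {D : Matrix q m ℝ} {M : Matrix q q ℝ} {Z' : Matrix k k ℝ}
    {M' : Matrix m m ℝ} {C' : Matrix m k ℝ} {D' : Matrix m m ℝ} (hM : M.IsSymm)
    (h : CertifiesCanonical A B C D M Z' M' C' D') {AH : Matrix kH kH ℝ} {Be : Matrix kH m ℝ}
    {Ce : Matrix m kH ℝ} {De : Matrix m m ℝ} (hDe : IsUnit De)
    (hH : IsHurwitz (AH - Be * De⁻¹ * Ce)) :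
    CertifiesCanonical (fromBlocks A (B * Ce) 0 AH) (fromRows (B * De) Be)
      (fromCols C (D * Ce)) (D * De) M (fromBlocks Z' 0 0 0) M' (fromCols C' (D' * Ce))
      (D' * De) := by
  obtain ⟨hIds, hD', hHurwitz⟩ := h
  refine ⟨factIds_extension hM hIds AH Be Ce De, hD'.mul hDe, ?_⟩
  rw [fromBlocks_sub_fromRows_mul_inv_mul_fromCols ((isUnit_iff_isUnit_det D').mp hD') AH Be Ce
    ((isUnit_iff_isUnit_det De).mp hDe)]
  exact isHurwitz_fromBlocks_zero₁₂ hHurwitz hH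

end Extension

theorem isUnit_det_De {nz nw : ℕ} (DH : Matrix (Fin nz) (Fin nw) ℝ) : IsUnit (De DH).det := by
  simp [De]

theorem Be_mul_De {nz nw kH : ℕ} (BH : Matrix (Fin kH) (Fin nw) ℝ)
    (DH : Matrix (Fin nz) (Fin nw) ℝ) : Be (nz := nz) BH * De DH = Be BH := by
  rw [Be, De, fromCols_mul_fromBlocks]
  simp

theorem Be_mul_Ce {nz nw kH : ℕ} (BH : Matrix (Fin kH) (Fin nw) ℝ)
    (CH : Matrix (Fin nz) (Fin kH) ℝ) :
    Be (nz := nz) BH * Ce (nw := nw) CH = 0 := by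
  simp [Be, Ce, fromCols_mul_fromRows]

theorem Be_mul_De_inv_mul_Ce {nz nw kH : ℕ} (BH : Matrix (Fin kH) (Fin nw) ℝ)
    (CH : Matrix (Fin nz) (Fin kH) ℝ) (DH : Matrix (Fin nz) (Fin nw) ℝ) :
    Be (nz := nz) BH * (De DH)⁻¹ * Ce (nw := nw) CH = 0 := by
  rw [← Be_mul_De BH DH, mul_nonsing_inv_cancel_right _ _ (isUnit_det_De DH), Be_mul_Ce]

/-- Extension of a canonical factorization certificate along a stable loop
transformation (identity (are3) in the proof of Lemma 6). -/
theorem canonical_factorization_extension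
    {nz nw k q kH : ℕ}
    (AΨ : Matrix (Fin k) (Fin k) ℝ) (BΨ : Matrix (Fin k) (Fin nz ⊕ Fin nw) ℝ)
    (CΨ : Matrix (Fin q) (Fin k) ℝ) (DΨ : Matrix (Fin q) (Fin nz ⊕ Fin nw) ℝ)
    (M : Matrix (Fin q) (Fin q) ℝ) (hM : M.IsSymm)
    (Z' : Matrix (Fin k) (Fin k) ℝ)
    (M' : Matrix (Fin nz ⊕ Fin nw) (Fin nz ⊕ Fin nw) ℝ)
    (C' : Matrix (Fin nz ⊕ Fin nw) (Fin k) ℝ)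
    (D' : Matrix (Fin nz ⊕ Fin nw) (Fin nz ⊕ Fin nw) ℝ)
    (hcert : CertifiesCanonical AΨ BΨ CΨ DΨ M Z' M' C' D')
    (AH : Matrix (Fin kH) (Fin kH) ℝ) (hAH : IsHurwitz AH)
    (BH : Matrix (Fin kH) (Fin nw) ℝ)
    (CH : Matrix (Fin nz) (Fin kH) ℝ) (DH : Matrix (Fin nz) (Fin nw) ℝ) :
    CertifiesCanonical
      (fromBlocks AΨ (BΨ * Ce CH) 0 AH)
      (fromRows (BΨ * De DH) (Be BH))
      (fromCols CΨ (DΨ * Ce CH))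
      (DΨ * De DH)
      M
      (fromBlocks Z' 0 0 0)
      M'
      (fromCols C' (D' * Ce CH))
      (D' * De DH) := by
  refine certifiesCanonical_extension hM hcert
    ((isUnit_iff_isUnit_det _).mpr (isUnit_det_De DH)) ?_
  rwa [Be_mul_De_inv_mul_Ce, sub_zero]

end IQCPaper
end
end
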